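/- arXiv:q-alg/9601014 — 4 statements merged into one kernel-verified Lean document; each statement's English description precedes it below -/
import Mathlib

section
/- Let A and U be dual Hopf algebras with nondegenerate pairing ⟨·,·⟩ and dual bases {e_i} of U and {f^i} of A. Then the linear functional a ↦ ⟨S²(e_i), f^i a⟩ (sum over i) is a right invariant integral on A, i.e. for all a ∈ A: ⟨S²(e_i), f^i a_{(1)}⟩ a_{(2)} = ⟨S²(e_i), f^i a⟩ 1_A. -/
open TensorProduct

/-- A pair of dually paired finite-dimensional Hopf algebras `U` (enveloping-algebra type) and
`A` (function-algebra type) over a field `k`, with a nondegenerate pairing realized by finite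
dual bases `{e i} ⊂ U`, `{f i} ⊂ A`, and invertible antipodes. -/
structure PairedHopf (k U A : Type*) (ι : Type*) [Field k] [Ring U] [Ring A]
    [HopfAlgebra k U] [HopfAlgebra k A] [Fintype ι] [DecidableEq ι] where
  pair : U →ₗ[k] A →ₗ[k] k
  pair_mul_left : ∀ (x y : U) (a : A), pair (x * y) a =
    (LinearMap.mul' k k ∘ₗ TensorProduct.map (pair x) (pair y)) (Coalgebra.comul (R := k) a)
  pair_mul_right : ∀ (x : U) (a b : A), pair x (a * b) =
    (LinearMap.mul' k k ∘ₗ TensorProduct.map (pair.flip a) (pair.flip b))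
      (Coalgebra.comul (R := k) x)
  pair_antipode : ∀ (x : U) (a : A),
    pair (HopfAlgebra.antipode (R := k) x) a = pair x (HopfAlgebra.antipode (R := k) a)
  pair_one_left : ∀ a : A, pair 1 a = Coalgebra.counit (R := k) a
  pair_one_right : ∀ x : U, pair x 1 = Coalgebra.counit (R := k) x
  SinvU : U →ₗ[k] U
  SinvA : A →ₗ[k] A
  SinvU_antipode : ∀ x : U, SinvU (HopfAlgebra.antipode (R := k) x) = x
  antipode_SinvU : ∀ x : U, HopfAlgebra.antipode (R := k) (SinvU x) = x
  SinvA_antipode : ∀ a : A, SinvA (HopfAlgebra.antipode (R := k) a) = a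
  antipode_SinvA : ∀ a : A, HopfAlgebra.antipode (R := k) (SinvA a) = a
  e : ι → U
  f : ι → A
  pair_basis : ∀ i j, pair (e i) (f j) = if i = j then 1 else 0
  expand_U : ∀ x : U, ∑ i, pair x (f i) • e i = x
  expand_A : ∀ a : A, ∑ i, pair (e i) a • f i = a

/-!
Write `x ⇀ a = a₍₁₎ ⟨x, a₍₂₎⟩` (`PairedHopf.hit`), so that `⟨u, x ⇀ a⟩ = ⟨u x, a⟩` and `A` is a
`U`-module algebra, and note that `λ(b) = ∑ ⟨S²(eᵢ), fⁱ b⟩ = tr(S² ∘ r_b)` for right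
multiplication `r_b`. Paired with `x`, right invariance says `λ(x ⇀ a) = ε(x) λ(a)`. The
module-algebra property gives `r_{x ⇀ a} = ∑ (x₍₂₎ ⇀) ∘ r_a ∘ (S⁻¹(x₍₁₎) ⇀)`; cycling the last
factor to the front of the trace and past `S²` turns it into `S(x₍₁₎) ⇀`, and
`S(x₍₁₎) x₍₂₎ = ε(x)`.
-/

open Coalgebra HopfAlgebra

namespace Coalgebra

variable {R H M ι : Type*} {κ Λ : ι → Type*} [CommSemiring R] [AddCommMonoid H] [Module R H]
  [Coalgebra R H] [AddCommMonoid M] [Module R M] {a : H}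

theorem sum_sum_trilinear_eq (F : H →ₗ[R] H →ₗ[R] H →ₗ[R] M) (r : Repr R a ι)
    (r₁ : ∀ i, Repr R (r.left i) (κ i)) (r₂ : ∀ i, Repr R (r.right i) (Λ i)) :
    ∑ i ∈ r.index, ∑ j ∈ (r₁ i).index, F ((r₁ i).left j) ((r₁ i).right j) (r.right i) =
      ∑ i ∈ r.index, ∑ j ∈ (r₂ i).index, F (r.left i) ((r₂ i).left j) ((r₂ i).right j) := by
  simpa only [map_sum, TensorProduct.lift.tmul, LinearMap.comp_apply,
    TensorProduct.uncurry_apply] using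
    congr(TensorProduct.lift (TensorProduct.uncurry (.id R) H H M ∘ₗ F)
      $(sum_tmul_tmul_eq r r₁ r₂))

end Coalgebra

namespace HopfAlgebra

variable {R H ι : Type*} [CommSemiring R] [Semiring H] [HopfAlgebra R H] {a : H}

theorem sum_right_mul_antipode_inv_eq_smul {T : H → H}
    (hTS : Function.LeftInverse T (antipode R)) (hST : Function.RightInverse T (antipode R))
    (r : Repr R a ι) :
    ∑ i ∈ r.index, r.right i * T (r.left i) = counit (R := R) a • 1 := by
  apply hTS.injective
  simp only [map_sum, antipode_mul_antidistrib, hST _, map_smul, antipode_one]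
  exact sum_mul_antipode_eq_smul r

end HopfAlgebra

namespace PairedHopf

variable {k U A ι : Type*} [Field k] [Ring U] [Ring A] [HopfAlgebra k U] [HopfAlgebra k A]
  [Fintype ι] [DecidableEq ι] (P : PairedHopf k U A ι)

theorem dualBases : Module.DualBases P.f fun i ↦ P.pair (P.e i) where
  eval_same i := by simp [P.pair_basis]
  eval_of_ne i j hij := by simp [P.pair_basis, hij]
  total {b c} h := by rw [← P.expand_A b, ← P.expand_A c]; simp only [h]

theorem trace_eq_sum_pair (φ : Module.End k A) :
    LinearMap.trace k A φ = ∑ i, P.pair (P.e i) (φ (P.f i)) := by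
  simp [LinearMap.trace_eq_matrix_trace k P.dualBases.basis, Matrix.trace,
    LinearMap.toMatrix_apply]

theorem pair_mul_right_eq_sum {κ : Type*} {x : U} (r : Repr k x κ) (a b : A) :
    P.pair x (a * b) = ∑ m ∈ r.index, P.pair (r.left m) a * P.pair (r.right m) b := by
  simp [P.pair_mul_right, ← r.eq, map_sum]

theorem pair_mul_left_eq_sum {κ : Type*} (x y : U) {a : A} (r : Repr k a κ) :
    P.pair (x * y) a = ∑ m ∈ r.index, P.pair x (r.left m) * P.pair y (r.right m) := by
  simp [P.pair_mul_left, ← r.eq, map_sum]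

def hit : U →ₗ[k] Module.End k A :=
  (TensorProduct.lift (LinearMap.smulRightₗ ∘ₗ P.pair.flip).flip ∘ₗ comul).flip

theorem hit_eq_sum {κ : Type*} (x : U) {a : A} (r : Repr k a κ) :
    P.hit x a = ∑ m ∈ r.index, P.pair x (r.right m) • r.left m := by
  simp [hit, ← r.eq, map_sum]

theorem pair_hit (u x : U) (a : A) : P.pair u (P.hit x a) = P.pair (u * x) a := by
  simp [P.hit_eq_sum x (ℛ k a), P.pair_mul_left_eq_sum u x (ℛ k a), mul_comm]

theorem hit_mul (x y : U) : P.hit (x * y) = P.hit x * P.hit y := by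
  ext a
  refine P.dualBases.total fun i ↦ ?_
  simp [pair_hit, mul_assoc]

theorem hit_one : P.hit 1 = 1 := by
  ext a
  refine P.dualBases.total fun i ↦ ?_
  simp [pair_hit]

theorem hit_mul_antipode_sq (x : U) :
    P.hit x * (antipode k * antipode k) =
      antipode k * antipode k * P.hit (antipode k (antipode k x)) := by
  ext a
  refine P.dualBases.total fun i ↦ ?_
  simp [pair_hit, ← P.pair_antipode, antipode_mul_antidistrib]

theorem hit_apply_mul {κ : Type*} {x : U} (r : Repr k x κ) (b c : A) :
    P.hit x (b * c) = ∑ m ∈ r.index, P.hit (r.left m) b * P.hit (r.right m) c := by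
  refine P.dualBases.total fun i ↦ ?_
  simp only [pair_hit, map_sum, P.pair_mul_right_eq_sum ((ℛ k (P.e i)).mul r),
    P.pair_mul_right_eq_sum (ℛ k (P.e i))]
  rw [Finset.sum_comm]
  simp [Finset.sum_product]

theorem mulRight_hit {κ : Type*} {z : U} (r : Repr k z κ) (a : A) :
    LinearMap.mulRight k (P.hit z a) =
      ∑ i ∈ r.index, P.hit (r.right i) * LinearMap.mulRight k a * P.hit (P.SinvU (r.left i)) := by
  ext c
  let F : U →ₗ[k] U →ₗ[k] U →ₗ[k] A := ((LinearMap.mul k U).flip ∘ₗ P.SinvU).compr₂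
    ((LinearMap.mul k A).compl₁₂ (P.hit.flip c) (P.hit.flip a))
  have hF (p q s : U) : F p q s = P.hit (q * P.SinvU p) c * P.hit s a := rfl
  simp only [LinearMap.sum_apply, Module.End.mul_apply, LinearMap.mulRight_apply]
  symm
  calc ∑ i ∈ r.index, P.hit (r.right i) (P.hit (P.SinvU (r.left i)) c * a)
      = ∑ i ∈ r.index, ∑ j ∈ (ℛ k (r.right i)).index,
          F (r.left i) ((ℛ k (r.right i)).left j) ((ℛ k (r.right i)).right j) := by
        simp only [hF, P.hit_apply_mul (ℛ k (r.right _)), hit_mul, Module.End.mul_apply]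
    _ = ∑ i ∈ r.index, ∑ j ∈ (ℛ k (r.left i)).index,
          F ((ℛ k (r.left i)).left j) ((ℛ k (r.left i)).right j) (r.right i) :=
        (sum_sum_trilinear_eq F r _ _).symm
    _ = ∑ i ∈ r.index, P.hit (counit (R := k) (r.left i) • 1) c * P.hit (r.right i) a := by
        simp only [hF, ← Finset.sum_mul, ← map_sum, ← LinearMap.sum_apply,
          sum_right_mul_antipode_inv_eq_smul P.SinvU_antipode P.antipode_SinvU]
    _ = c * P.hit z a := by
        conv_rhs => rw [← sum_counit_smul r]
        simp [Finset.mul_sum, hit_one]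

theorem trace_antipode_sq_mul_mulRight_hit (z : U) (a : A) :
    LinearMap.trace k A (antipode k * antipode k * LinearMap.mulRight k (P.hit z a)) =
      counit z * LinearMap.trace k A (antipode k * antipode k * LinearMap.mulRight k a) := by
  let r := ℛ k z
  have hcomm (i) : P.hit (P.SinvU (r.left i)) * (antipode k * antipode k) =
      antipode k * antipode k * P.hit (antipode k (r.left i)) := by
    rw [hit_mul_antipode_sq, P.antipode_SinvU]
  calc LinearMap.trace k A (antipode k * antipode k * LinearMap.mulRight k (P.hit z a))
      = ∑ i ∈ r.index, LinearMap.trace k A (P.hit (P.SinvU (r.left i)) *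
          (antipode k * antipode k * P.hit (r.right i) * LinearMap.mulRight k a)) := by
        simp only [P.mulRight_hit r, Finset.mul_sum, map_sum, ← mul_assoc]
        exact Finset.sum_congr rfl fun i _ ↦ LinearMap.trace_mul_comm k _ _
    _ = LinearMap.trace k A (antipode k * antipode k *
          P.hit (∑ i ∈ r.index, antipode k (r.left i) * r.right i) * LinearMap.mulRight k a) := by
        simp only [← mul_assoc, hcomm, map_sum, hit_mul, Finset.mul_sum, Finset.sum_mul]
    _ = counit z * LinearMap.trace k A (antipode k * antipode k * LinearMap.mulRight k a) := by
        simp [sum_antipode_mul_eq_smul, hit_one]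

theorem sum_pair_antipode_sq_mul_eq_trace (b : A) :
    ∑ i, P.pair (antipode k (antipode k (P.e i))) (P.f i * b) =
      LinearMap.trace k A (antipode k * antipode k * LinearMap.mulRight k b) := by
  simp [P.trace_eq_sum_pair, P.pair_antipode]

theorem pair_lid_map_comul (φ : A →ₗ[k] k) (u : U) (a : A) :
    P.pair u (TensorProduct.lid k A (TensorProduct.map φ LinearMap.id (comul a))) =
      φ (P.hit u a) := by
  simp [← (ℛ k a).eq, map_sum, P.hit_eq_sum u (ℛ k a), mul_comm]

end PairedHopf

open TensorProduct HopfAlgebra Coalgebra in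
/-- Radford–Larson trace formula: for dually paired finite-dimensional Hopf algebras `A`, `U`
with dual bases `{e i}`, `{f i}`, the functional `a ↦ ∑ i, ⟨S²(e i), f i * a⟩` is a right
invariant integral on `A`: `∑ i ⟨S²(e i), f i * a₍₁₎⟩ a₍₂₎ = (∑ i ⟨S²(e i), f i * a⟩) 1`. -/
theorem trace_formula_right_invariant
    {k U A ι : Type*} [Field k] [Ring U] [Ring A]
    [HopfAlgebra k U] [HopfAlgebra k A] [Fintype ι] [DecidableEq ι]
    (P : PairedHopf k U A ι) :
    ∀ a : A,
      (TensorProduct.lid k A)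
        (TensorProduct.map
          (∑ i, (P.pair (antipode (R := k) (antipode (R := k) (P.e i)))) ∘ₗ
            LinearMap.mulLeft k (P.f i))
          LinearMap.id (comul (R := k) a)) =
      (∑ i, P.pair (antipode (R := k) (antipode (R := k) (P.e i))) (P.f i * a)) • (1 : A) := by
  intro a
  refine P.dualBases.total fun j ↦ ?_
  simp only [P.pair_lid_map_comul, LinearMap.sum_apply, LinearMap.comp_apply,
    LinearMap.mulLeft_apply, P.sum_pair_antipode_sq_mul_eq_trace,
    P.trace_antipode_sq_mul_mulRight_hit, map_smul, P.pair_one_right, smul_eq_mul, mul_comm]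
end

section
/- With dual bases {e_i}, {f^i} of dually paired finite-dimensional Hopf algebras U and A, one has Σ_{i,j} ⟨e_i e_j, S^{-1}(f^i) S^{-2}(f^j)⟩ = 1; consequently the integral defined by the modified trace formula is nontrivial. -/
open TensorProduct Coalgebra HopfAlgebra

section HopfLemmas

variable {R A : Type*} [CommSemiring R] [Semiring A] [HopfAlgebra R A]

theorem my_antipode_one : HopfAlgebra.antipode (R := R) (1 : A) = 1 := by
  have h := HopfAlgebra.mul_antipode_rTensor_comul_apply (R := R) (A := A) 1
  rw [Bialgebra.comul_one, Algebra.TensorProduct.one_def] at h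
  simpa using h

theorem my_sum_counit_left_smul {a : A} (r : Coalgebra.Repr R a (A × A)) :
    ∑ i ∈ r.index, Coalgebra.counit (R := R) (r.left i) • r.right i = a := by
  have h := congrArg (TensorProduct.lid R A) (Coalgebra.sum_counit_tmul_eq (R := R) r)
  simp only [map_sum, TensorProduct.lid_tmul, one_smul] at h
  exact h

theorem my_sum_counit_right_smul {a : A} (r : Coalgebra.Repr R a (A × A)) :
    ∑ i ∈ r.index, Coalgebra.counit (R := R) (r.right i) • r.left i = a := by
  have h := congrArg (TensorProduct.rid R A) (Coalgebra.sum_tmul_counit_eq (R := R) r)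
  simp only [map_sum, TensorProduct.rid_tmul, one_smul] at h
  exact h

theorem my_antipode_mul (a b : A) :
    HopfAlgebra.antipode (R := R) (a * b) =
      HopfAlgebra.antipode (R := R) b * HopfAlgebra.antipode (R := R) a := by
  set S : A →ₗ[R] A := HopfAlgebra.antipode (R := R) with hS
  set ra := Coalgebra.Repr.arbitrary R a with hra
  set rb := Coalgebra.Repr.arbitrary R b with hrb
  set rla : (i : A × A) → Coalgebra.Repr R (ra.left i) (A × A) :=
    fun i => Coalgebra.Repr.arbitrary R (ra.left i) with hrla
  set rra : (i : A × A) → Coalgebra.Repr R (ra.right i) (A × A) :=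
    fun i => Coalgebra.Repr.arbitrary R (ra.right i) with hrra
  set rlb : (j : A × A) → Coalgebra.Repr R (rb.left j) (A × A) :=
    fun j => Coalgebra.Repr.arbitrary R (rb.left j) with hrlb
  set rrb : (j : A × A) → Coalgebra.Repr R (rb.right j) (A × A) :=
    fun j => Coalgebra.Repr.arbitrary R (rb.right j) with hrrb
  -- the magic element X
  set X : A := ∑ j ∈ rb.index, ∑ q ∈ (rrb j).index, ∑ i ∈ ra.index, ∑ p ∈ (rra i).index,
      S (ra.left i * rb.left j) *
        ((rra i).left p * ((rrb j).left q * (S ((rrb j).right q) * S ((rra i).right p))))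
      with hX
  -- Claim 1 : X = S (a * b)
  have claim1 : X = S (a * b) := by
    have hq : ∀ (j : A × A) (i : A × A) (p : (rra i).ι),
        ∑ q ∈ (rrb j).index, S (ra.left i * rb.left j) *
          ((rra i).left p * ((rrb j).left q * (S ((rrb j).right q) * S ((rra i).right p))))
        = Coalgebra.counit (R := R) (rb.right j) •
            (S (ra.left i * rb.left j) * ((rra i).left p * S ((rra i).right p))) := by
      intro j i p
      rw [← Finset.mul_sum, ← Finset.mul_sum]
      have hinner : ∑ q ∈ (rrb j).index,
          (rrb j).left q * (S ((rrb j).right q) * S ((rra i).right p))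
          = Coalgebra.counit (R := R) (rb.right j) • S ((rra i).right p) := by
        calc ∑ q ∈ (rrb j).index, (rrb j).left q * (S ((rrb j).right q) * S ((rra i).right p))
            = (∑ q ∈ (rrb j).index, (rrb j).left q * S ((rrb j).right q)) * S ((rra i).right p) := by
              rw [Finset.sum_mul]; simp only [mul_assoc]
          _ = _ := by
              rw [HopfAlgebra.sum_mul_antipode_eq_smul (rrb j), smul_mul_assoc, one_mul]
      rw [hinner, mul_smul_comm, mul_smul_comm]
    have hp : ∀ (j : A × A) (i : A × A),
        ∑ p ∈ (rra i).index, Coalgebra.counit (R := R) (rb.right j) •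
            (S (ra.left i * rb.left j) * ((rra i).left p * S ((rra i).right p)))
        = Coalgebra.counit (R := R) (rb.right j) •
            (Coalgebra.counit (R := R) (ra.right i) • S (ra.left i * rb.left j)) := by
      intro j i
      rw [← Finset.smul_sum, ← Finset.mul_sum,
        HopfAlgebra.sum_mul_antipode_eq_smul (rra i), mul_smul_comm, mul_one]
    -- reorder sums and collapse
    rw [hX]
    calc ∑ j ∈ rb.index, ∑ q ∈ (rrb j).index, ∑ i ∈ ra.index, ∑ p ∈ (rra i).index,
          S (ra.left i * rb.left j) *
            ((rra i).left p * ((rrb j).left q * (S ((rrb j).right q) * S ((rra i).right p))))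
        = ∑ j ∈ rb.index, ∑ i ∈ ra.index, ∑ p ∈ (rra i).index, ∑ q ∈ (rrb j).index,
          S (ra.left i * rb.left j) *
            ((rra i).left p * ((rrb j).left q * (S ((rrb j).right q) * S ((rra i).right p)))) := by
          refine Finset.sum_congr rfl fun j _ => ?_
          rw [Finset.sum_comm]
          exact Finset.sum_congr rfl fun i _ => Finset.sum_comm
      _ = ∑ j ∈ rb.index, ∑ i ∈ ra.index, Coalgebra.counit (R := R) (rb.right j) •
            (Coalgebra.counit (R := R) (ra.right i) • S (ra.left i * rb.left j)) := by
          refine Finset.sum_congr rfl fun j _ => Finset.sum_congr rfl fun i _ => ?_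
          rw [← hp j i]
          exact Finset.sum_congr rfl fun p _ => hq j i p
      _ = ∑ j ∈ rb.index, Coalgebra.counit (R := R) (rb.right j) • S (a * rb.left j) := by
          refine Finset.sum_congr rfl fun j _ => ?_
          rw [← Finset.smul_sum]
          congr 1
          calc ∑ i ∈ ra.index, Coalgebra.counit (R := R) (ra.right i) • S (ra.left i * rb.left j)
              = S ((∑ i ∈ ra.index, Coalgebra.counit (R := R) (ra.right i) • ra.left i) * rb.left j) := by
                rw [Finset.sum_mul, map_sum]
                exact Finset.sum_congr rfl fun i _ => by rw [smul_mul_assoc, map_smul]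
            _ = S (a * rb.left j) := by rw [my_sum_counit_right_smul ra]
      _ = S (a * b) := by
          calc ∑ j ∈ rb.index, Coalgebra.counit (R := R) (rb.right j) • S (a * rb.left j)
              = S (a * ∑ j ∈ rb.index, Coalgebra.counit (R := R) (rb.right j) • rb.left j) := by
                rw [Finset.mul_sum, map_sum]
                exact Finset.sum_congr rfl fun j _ => by rw [mul_smul_comm, map_smul]
            _ = S (a * b) := by rw [my_sum_counit_right_smul rb]
  -- Claim 2 : X = S b * S a
  have transportA : ∀ (j : A × A) (q : (rrb j).ι),
      ∑ i ∈ ra.index, ∑ p ∈ (rra i).index,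
        S (ra.left i * rb.left j) *
          ((rra i).left p * ((rrb j).left q * (S ((rrb j).right q) * S ((rra i).right p))))
      = ∑ i ∈ ra.index, ∑ p ∈ (rla i).index,
        S ((rla i).left p * rb.left j) *
          ((rla i).right p * ((rrb j).left q * (S ((rrb j).right q) * S (ra.right i)))) := by
    intro j q
    let f : A →ₗ[R] A := S ∘ₗ LinearMap.mulRight R (rb.left j)
    let g : A →ₗ[R] A := LinearMap.mulRight R ((rrb j).left q)
    let h : A →ₗ[R] A := LinearMap.mulLeft R (S ((rrb j).right q)) ∘ₗ S
    have key := Coalgebra.sum_map_tmul_tmul_eq (R := R) f g h a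
      (repr := ra) (a₁ := rla) (a₂ := rra)
    have key2 := congrArg (LinearMap.mul' R A ∘ₗ (LinearMap.mul' R A).lTensor A) key
    simp only [map_sum, LinearMap.coe_comp, Function.comp_apply, LinearMap.lTensor_tmul,
      LinearMap.mul'_apply, f, g, h, LinearMap.mulRight_apply, LinearMap.mulLeft_apply,
      mul_assoc] at key2
    simpa only [mul_assoc] using key2
  have transportB : ∀ (i : A × A) (p : (rla i).ι),
      ∑ j ∈ rb.index, ∑ q ∈ (rrb j).index,
        S ((rla i).left p * rb.left j) *
          ((rla i).right p * ((rrb j).left q * (S ((rrb j).right q) * S (ra.right i))))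
      = ∑ j ∈ rb.index, ∑ q ∈ (rlb j).index,
        S ((rla i).left p * (rlb j).left q) *
          ((rla i).right p * ((rlb j).right q * (S (rb.right j) * S (ra.right i)))) := by
    intro i p
    let f : A →ₗ[R] A := S ∘ₗ LinearMap.mulLeft R ((rla i).left p)
    let g : A →ₗ[R] A := LinearMap.mulLeft R ((rla i).right p)
    let h : A →ₗ[R] A := LinearMap.mulRight R (S (ra.right i)) ∘ₗ S
    have key := Coalgebra.sum_map_tmul_tmul_eq (R := R) f g h b
      (repr := rb) (a₁ := rlb) (a₂ := rrb)
    have key2 := congrArg (LinearMap.mul' R A ∘ₗ (LinearMap.mul' R A).lTensor A) key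
    simp only [map_sum, LinearMap.coe_comp, Function.comp_apply, LinearMap.lTensor_tmul,
      LinearMap.mul'_apply, f, g, h, LinearMap.mulRight_apply, LinearMap.mulLeft_apply,
      mul_assoc] at key2
    simpa only [mul_assoc] using key2
  have collapse : ∀ (i : A × A) (j : A × A),
      ∑ p ∈ (rla i).index, ∑ q ∈ (rlb j).index,
        S ((rla i).left p * (rlb j).left q) * ((rla i).right p * (rlb j).right q)
      = algebraMap R A (Coalgebra.counit (R := R) (ra.left i) *
          Coalgebra.counit (R := R) (rb.left j)) := by
    intro i j
    have h0 := HopfAlgebra.mul_antipode_rTensor_comul_apply (R := R) (ra.left i * rb.left j)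
    rw [Bialgebra.counit_mul, Bialgebra.comul_mul, ← (rla i).eq, ← (rlb j).eq,
      Finset.sum_mul_sum] at h0
    simp only [Algebra.TensorProduct.tmul_mul_tmul] at h0
    simp only [map_sum, LinearMap.rTensor_tmul, LinearMap.mul'_apply] at h0
    exact h0
  have claim2 : X = S b * S a := by
    rw [hX]
    calc ∑ j ∈ rb.index, ∑ q ∈ (rrb j).index, ∑ i ∈ ra.index, ∑ p ∈ (rra i).index,
          S (ra.left i * rb.left j) *
            ((rra i).left p * ((rrb j).left q * (S ((rrb j).right q) * S ((rra i).right p))))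
        = ∑ j ∈ rb.index, ∑ q ∈ (rrb j).index, ∑ i ∈ ra.index, ∑ p ∈ (rla i).index,
          S ((rla i).left p * rb.left j) *
            ((rla i).right p * ((rrb j).left q * (S ((rrb j).right q) * S (ra.right i)))) := by
          exact Finset.sum_congr rfl fun j _ => Finset.sum_congr rfl fun q _ => transportA j q
      _ = ∑ j ∈ rb.index, ∑ i ∈ ra.index, ∑ q ∈ (rrb j).index, ∑ p ∈ (rla i).index,
          S ((rla i).left p * rb.left j) *
            ((rla i).right p * ((rrb j).left q * (S ((rrb j).right q) * S (ra.right i)))) :=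
          Finset.sum_congr rfl fun j _ => Finset.sum_comm
      _ = ∑ i ∈ ra.index, ∑ j ∈ rb.index, ∑ q ∈ (rrb j).index, ∑ p ∈ (rla i).index,
          S ((rla i).left p * rb.left j) *
            ((rla i).right p * ((rrb j).left q * (S ((rrb j).right q) * S (ra.right i)))) :=
          Finset.sum_comm
      _ = ∑ i ∈ ra.index, ∑ j ∈ rb.index, ∑ p ∈ (rla i).index, ∑ q ∈ (rrb j).index,
          S ((rla i).left p * rb.left j) *
            ((rla i).right p * ((rrb j).left q * (S ((rrb j).right q) * S (ra.right i)))) :=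
          Finset.sum_congr rfl fun i _ => Finset.sum_congr rfl fun j _ => Finset.sum_comm
      _ = ∑ i ∈ ra.index, ∑ p ∈ (rla i).index, ∑ j ∈ rb.index, ∑ q ∈ (rrb j).index,
          S ((rla i).left p * rb.left j) *
            ((rla i).right p * ((rrb j).left q * (S ((rrb j).right q) * S (ra.right i)))) :=
          Finset.sum_congr rfl fun i _ => Finset.sum_comm
      _ = ∑ i ∈ ra.index, ∑ p ∈ (rla i).index, ∑ j ∈ rb.index, ∑ q ∈ (rlb j).index,
          S ((rla i).left p * (rlb j).left q) *
            ((rla i).right p * ((rlb j).right q * (S (rb.right j) * S (ra.right i)))) :=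
          Finset.sum_congr rfl fun i _ => Finset.sum_congr rfl fun p _ => transportB i p
      _ = ∑ i ∈ ra.index, ∑ j ∈ rb.index, ∑ p ∈ (rla i).index, ∑ q ∈ (rlb j).index,
          S ((rla i).left p * (rlb j).left q) *
            ((rla i).right p * ((rlb j).right q * (S (rb.right j) * S (ra.right i)))) :=
          Finset.sum_congr rfl fun i _ => Finset.sum_comm
      _ = ∑ i ∈ ra.index, ∑ j ∈ rb.index,
          algebraMap R A (Coalgebra.counit (R := R) (ra.left i) *
            Coalgebra.counit (R := R) (rb.left j)) * (S (rb.right j) * S (ra.right i)) := by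
          refine Finset.sum_congr rfl fun i _ => Finset.sum_congr rfl fun j _ => ?_
          rw [← collapse i j, Finset.sum_mul]
          refine Finset.sum_congr rfl fun p _ => ?_
          rw [Finset.sum_mul]
          refine Finset.sum_congr rfl fun q _ => ?_
          simp only [mul_assoc]
      _ = ∑ i ∈ ra.index, Coalgebra.counit (R := R) (ra.left i) • (S b * S (ra.right i)) := by
          refine Finset.sum_congr rfl fun i _ => ?_
          have : ∀ j, algebraMap R A (Coalgebra.counit (R := R) (ra.left i) *
              Coalgebra.counit (R := R) (rb.left j)) * (S (rb.right j) * S (ra.right i))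
              = Coalgebra.counit (R := R) (ra.left i) •
                (Coalgebra.counit (R := R) (rb.left j) • (S (rb.right j) * S (ra.right i))) := by
            intro j
            rw [← Algebra.smul_def, mul_smul]
          rw [Finset.sum_congr rfl fun j _ => this j, ← Finset.smul_sum]
          congr 1
          calc ∑ j ∈ rb.index, Coalgebra.counit (R := R) (rb.left j) •
                (S (rb.right j) * S (ra.right i))
              = (∑ j ∈ rb.index, Coalgebra.counit (R := R) (rb.left j) • S (rb.right j)) *
                  S (ra.right i) := by
                rw [Finset.sum_mul]
                exact Finset.sum_congr rfl fun j _ => (smul_mul_assoc _ _ _).symm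
            _ = S (∑ j ∈ rb.index, Coalgebra.counit (R := R) (rb.left j) • rb.right j) *
                  S (ra.right i) := by rw [map_sum]; simp only [map_smul]
            _ = S b * S (ra.right i) := by rw [my_sum_counit_left_smul rb]
      _ = S b * S a := by
          calc ∑ i ∈ ra.index, Coalgebra.counit (R := R) (ra.left i) • (S b * S (ra.right i))
              = S b * ∑ i ∈ ra.index, Coalgebra.counit (R := R) (ra.left i) • S (ra.right i) := by
                rw [Finset.mul_sum]
                exact Finset.sum_congr rfl fun i _ => (mul_smul_comm _ _ _).symm
            _ = S b * S (∑ i ∈ ra.index, Coalgebra.counit (R := R) (ra.left i) • ra.right i) := by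
                rw [map_sum]; simp only [map_smul]
            _ = S b * S a := by rw [my_sum_counit_left_smul ra]
  rw [← claim1, claim2]


end HopfLemmas

section Main

variable {k U A ι : Type*} [Field k] [Ring U] [Ring A]
    [HopfAlgebra k U] [HopfAlgebra k A] [Fintype ι] [DecidableEq ι]

theorem PairedHopf.pair_SinvA (P : PairedHopf k U A ι) (u : U) (c : A) :
    P.pair u (P.SinvA c) = P.pair (P.SinvU u) c := by
  have h := P.pair_antipode (P.SinvU u) (P.SinvA c)
  rwa [P.antipode_SinvU, P.antipode_SinvA] at h

theorem PairedHopf.SinvA_one (P : PairedHopf k U A ι) : P.SinvA (1 : A) = 1 := by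
  have h := P.SinvA_antipode (1 : A)
  rwa [my_antipode_one] at h

theorem PairedHopf.SinvA_mul (P : PairedHopf k U A ι) (u v : A) :
    P.SinvA (u * v) = P.SinvA v * P.SinvA u := by
  have h : u * v = HopfAlgebra.antipode (R := k) (P.SinvA v * P.SinvA u) := by
    rw [my_antipode_mul, P.antipode_SinvA, P.antipode_SinvA]
  rw [h, P.SinvA_antipode]

/-- The key Hopf-algebra identity `∑ S⁻¹(a₍₁₎) * S⁻²(a₍₂₎) = ε(a) • 1`. -/
theorem PairedHopf.sum_Sinv_mul_Sinv_sq (P : PairedHopf k U A ι) (c : A)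
    (r : Coalgebra.Repr k c (A × A)) :
    ∑ t ∈ r.index, P.SinvA (r.left t) * P.SinvA (P.SinvA (r.right t))
      = Coalgebra.counit (R := k) c • (1 : A) := by
  have hCO : ∑ t ∈ r.index, P.SinvA (r.right t) * r.left t
      = Coalgebra.counit (R := k) c • (1 : A) := by
    have h2 : HopfAlgebra.antipode (R := k) (∑ t ∈ r.index, P.SinvA (r.right t) * r.left t)
        = HopfAlgebra.antipode (R := k) (Coalgebra.counit (R := k) c • (1 : A)) := by
      rw [map_sum]
      have hterm : ∀ t ∈ r.index,
          HopfAlgebra.antipode (R := k) (P.SinvA (r.right t) * r.left t)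
          = HopfAlgebra.antipode (R := k) (r.left t) * r.right t := by
        intro t _
        rw [my_antipode_mul, P.antipode_SinvA]
      rw [Finset.sum_congr rfl hterm, HopfAlgebra.sum_antipode_mul_eq_algebraMap_counit r, map_smul,
        my_antipode_one, Algebra.algebraMap_eq_smul_one]
    have h3 := congrArg P.SinvA h2
    rwa [P.SinvA_antipode, P.SinvA_antipode] at h3
  calc ∑ t ∈ r.index, P.SinvA (r.left t) * P.SinvA (P.SinvA (r.right t))
      = ∑ t ∈ r.index, P.SinvA (P.SinvA (r.right t) * r.left t) :=
        Finset.sum_congr rfl fun t _ => (P.SinvA_mul _ _).symm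
    _ = P.SinvA (∑ t ∈ r.index, P.SinvA (r.right t) * r.left t) := (map_sum _ _ _).symm
    _ = _ := by rw [hCO, map_smul, P.SinvA_one]

end Main

/-- With dual bases `{e i} ⊂ U`, `{f i} ⊂ A` of dually paired finite-dimensional Hopf
algebras, one has `∑ i j, ⟨e i * e j, S⁻¹(f i) * S⁻²(f j)⟩ = 1`; consequently the integral
defined by the modified trace formula `⟨x⟩⟨a⟩ = ∑ i ⟨x S⁻²(e i), a f i⟩` is nontrivial. -/
theorem modified_trace_formula_nontrivial
    {k U A ι : Type*} [Field k] [Ring U] [Ring A]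
    [HopfAlgebra k U] [HopfAlgebra k A] [Fintype ι] [DecidableEq ι]
    (P : PairedHopf k U A ι) :
    (∑ i, ∑ j, P.pair (P.e i * P.e j) (P.SinvA (P.f i) * P.SinvA (P.SinvA (P.f j)))) = 1 ∧
    ∃ (x : U) (a : A), (∑ i, P.pair (x * P.SinvU (P.SinvU (P.e i))) (a * P.f i)) ≠ 0 := by
  classical
  have hT : (∑ i, ∑ j, P.pair (P.e i * P.e j)
      (P.SinvA (P.f i) * P.SinvA (P.SinvA (P.f j)))) = 1 := by
    have expandPair : ∀ (x : U) (c : A),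
        P.pair x c = ∑ m, P.pair (P.e m) c * P.pair x (P.f m) := by
      intro x c
      conv_lhs => rw [← P.expand_A c]
      rw [map_sum]
      exact Finset.sum_congr rfl fun m _ => by rw [map_smul, smul_eq_mul]
    calc (∑ i, ∑ j, P.pair (P.e i * P.e j) (P.SinvA (P.f i) * P.SinvA (P.SinvA (P.f j))))
        = ∑ i, ∑ j, ∑ m, P.pair (P.e m) (P.SinvA (P.f i) * P.SinvA (P.SinvA (P.f j))) *
            P.pair (P.e i * P.e j) (P.f m) :=
          Finset.sum_congr rfl fun i _ => Finset.sum_congr rfl fun j _ => expandPair _ _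
      _ = ∑ i, ∑ m, ∑ j, P.pair (P.e m) (P.SinvA (P.f i) * P.SinvA (P.SinvA (P.f j))) *
            P.pair (P.e i * P.e j) (P.f m) :=
          Finset.sum_congr rfl fun i _ => Finset.sum_comm
      _ = ∑ m, ∑ i, ∑ j, P.pair (P.e m) (P.SinvA (P.f i) * P.SinvA (P.SinvA (P.f j))) *
            P.pair (P.e i * P.e j) (P.f m) := Finset.sum_comm
      _ = ∑ m, Coalgebra.counit (R := k) (P.f m) * P.pair (P.e m) 1 := by
          refine Finset.sum_congr rfl fun m _ => ?_
          set r := Coalgebra.Repr.arbitrary k (P.f m) with hr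
          have hmul : ∀ i j, P.pair (P.e i * P.e j) (P.f m)
              = ∑ t ∈ r.index, P.pair (P.e i) (r.left t) * P.pair (P.e j) (r.right t) := by
            intro i j
            rw [P.pair_mul_left, ← r.eq]
            simp only [map_sum, LinearMap.coe_comp, Function.comp_apply,
              TensorProduct.map_tmul, LinearMap.mul'_apply]
          have key_t : ∀ t, P.pair (P.e m) (P.SinvA (r.left t) * P.SinvA (P.SinvA (r.right t)))
              = ∑ i, ∑ j, P.pair (P.e m)
                  (P.SinvA (P.f i) * P.SinvA (P.SinvA (P.f j))) *
                  (P.pair (P.e i) (r.left t) * P.pair (P.e j) (r.right t)) := by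
            intro t
            have e1 : P.SinvA (r.left t) = ∑ i, P.pair (P.e i) (r.left t) • P.SinvA (P.f i) := by
              conv_lhs => rw [← P.expand_A (r.left t)]
              rw [map_sum]
              exact Finset.sum_congr rfl fun i _ => map_smul _ _ _
            have e2 : P.SinvA (P.SinvA (r.right t))
                = ∑ j, P.pair (P.e j) (r.right t) • P.SinvA (P.SinvA (P.f j)) := by
              conv_lhs => rw [← P.expand_A (r.right t)]
              rw [map_sum, map_sum]
              exact Finset.sum_congr rfl fun j _ => by rw [map_smul, map_smul]
            rw [e1, e2, Finset.sum_mul_sum, map_sum]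
            refine Finset.sum_congr rfl fun i _ => ?_
            rw [map_sum]
            refine Finset.sum_congr rfl fun j _ => ?_
            rw [smul_mul_smul_comm, map_smul, smul_eq_mul, mul_comm]
          calc ∑ i, ∑ j, P.pair (P.e m) (P.SinvA (P.f i) * P.SinvA (P.SinvA (P.f j))) *
                P.pair (P.e i * P.e j) (P.f m)
              = ∑ i, ∑ j, ∑ t ∈ r.index,
                  P.pair (P.e m) (P.SinvA (P.f i) * P.SinvA (P.SinvA (P.f j))) *
                  (P.pair (P.e i) (r.left t) * P.pair (P.e j) (r.right t)) := by
                refine Finset.sum_congr rfl fun i _ => Finset.sum_congr rfl fun j _ => ?_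
                rw [hmul i j, Finset.mul_sum]
            _ = ∑ i, ∑ t ∈ r.index, ∑ j,
                  P.pair (P.e m) (P.SinvA (P.f i) * P.SinvA (P.SinvA (P.f j))) *
                  (P.pair (P.e i) (r.left t) * P.pair (P.e j) (r.right t)) :=
                Finset.sum_congr rfl fun i _ => Finset.sum_comm
            _ = ∑ t ∈ r.index, ∑ i, ∑ j,
                  P.pair (P.e m) (P.SinvA (P.f i) * P.SinvA (P.SinvA (P.f j))) *
                  (P.pair (P.e i) (r.left t) * P.pair (P.e j) (r.right t)) :=
                Finset.sum_comm
            _ = ∑ t ∈ r.index,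
                  P.pair (P.e m) (P.SinvA (r.left t) * P.SinvA (P.SinvA (r.right t))) :=
                Finset.sum_congr rfl fun t _ => (key_t t).symm
            _ = P.pair (P.e m) (∑ t ∈ r.index,
                  P.SinvA (r.left t) * P.SinvA (P.SinvA (r.right t))) := (map_sum _ _ _).symm
            _ = Coalgebra.counit (R := k) (P.f m) * P.pair (P.e m) 1 := by
                rw [P.sum_Sinv_mul_Sinv_sq (P.f m) r, map_smul, smul_eq_mul]
      _ = 1 := by
          have hlin : ∑ m, Coalgebra.counit (R := k) (P.f m) * P.pair (P.e m) 1
              = Coalgebra.counit (R := k) (∑ m, P.pair (P.e m) (1 : A) • P.f m) := by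
            rw [map_sum]
            exact Finset.sum_congr rfl fun m _ => by rw [map_smul, smul_eq_mul, mul_comm]
          rw [hlin, P.expand_A (1 : A), Bialgebra.counit_one]
  refine ⟨hT, ?_⟩
  by_contra hc
  push_neg at hc
  have swapB : ∀ (B : U →ₗ[k] A →ₗ[k] k),
      (∑ j, B (P.e j) (P.SinvA (P.f j))) = ∑ j, B (P.SinvU (P.e j)) (P.f j) := by
    intro B
    calc ∑ j, B (P.e j) (P.SinvA (P.f j))
        = ∑ j, B (P.e j) (∑ m, P.pair (P.SinvU (P.e m)) (P.f j) • P.f m) := by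
          refine Finset.sum_congr rfl fun j _ => ?_
          congr 1
          conv_lhs => rw [← P.expand_A (P.SinvA (P.f j))]
          exact Finset.sum_congr rfl fun m _ => by rw [P.pair_SinvA]
      _ = ∑ j, ∑ m, P.pair (P.SinvU (P.e m)) (P.f j) • B (P.e j) (P.f m) := by
          refine Finset.sum_congr rfl fun j _ => ?_
          rw [map_sum]
          exact Finset.sum_congr rfl fun m _ => by rw [map_smul]
      _ = ∑ m, ∑ j, P.pair (P.SinvU (P.e m)) (P.f j) • B (P.e j) (P.f m) := Finset.sum_comm
      _ = ∑ m, B (P.SinvU (P.e m)) (P.f m) := by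
          refine Finset.sum_congr rfl fun m _ => ?_
          have h4 : ∑ j, P.pair (P.SinvU (P.e m)) (P.f j) • B (P.e j) (P.f m)
              = B (∑ j, P.pair (P.SinvU (P.e m)) (P.f j) • P.e j) (P.f m) := by
            rw [map_sum, LinearMap.sum_apply]
            exact Finset.sum_congr rfl fun j _ => by rw [map_smul, LinearMap.smul_apply]
          rw [h4, P.expand_U]
  have hswap2 : ∀ (x : U) (c : A),
      (∑ j, P.pair (x * P.e j) (c * P.SinvA (P.SinvA (P.f j))))
        = ∑ j, P.pair (x * P.SinvU (P.SinvU (P.e j))) (c * P.f j) := by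
    intro x c
    let B0 : U →ₗ[k] A →ₗ[k] k := (P.pair ∘ₗ LinearMap.mulLeft k x).compl₂ (LinearMap.mulLeft k c)
    have h1 := swapB (B0.compl₂ P.SinvA)
    have h2 := swapB (B0 ∘ₗ P.SinvU)
    exact h1.trans h2
  have h1 : (1 : k) = 0 := by
    calc (1 : k) = ∑ i, ∑ j, P.pair (P.e i * P.e j)
          (P.SinvA (P.f i) * P.SinvA (P.SinvA (P.f j))) := hT.symm
      _ = ∑ i, ∑ j, P.pair (P.e i * P.SinvU (P.SinvU (P.e j)))
          (P.SinvA (P.f i) * P.f j) :=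
          Finset.sum_congr rfl fun i _ => hswap2 (P.e i) (P.SinvA (P.f i))
      _ = 0 := by
          rw [Finset.sum_congr rfl fun i _ => hc (P.e i) (P.SinvA (P.f i))]
          simp
  exact one_ne_zero h1
end

section
/- Let ⟨·⟩ be a right invariant integral on a finite-dimensional Hopf algebra A with dual basis {f^i} (dual to {e_i} ⊂ U), normalized so that Σ_i ⟨e_i⟩⟨S^{-1}(f^i)⟩ = 1, where ⟨x⟩ for x ∈ U denotes the corresponding integral on U. If a ∈ A satisfies ⟨a f^i⟩ = 0 for all i, then a = 0. (Nondegeneracy of the integral.) -/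
/-!
Right invariance of `⟨·⟩` gives the identity `⟨b₁ y⟩ b₂ = ⟨b y₁⟩ S(y₂)`, so if `⟨a ·⟩`
vanishes then `⟨a₁ y⟩ a₂ = 0` for every `y`. On the other hand, moving `S⁻¹` across the pairing
and using `S⁻¹(x₁) S⁻²(x₂) = ε(x)` in `U` turns the trace formula into
`ε(b) = ∑ⱼ ⟨eⱼ⟩ ⟨b S⁻¹(fⱼ)⟩`. Hence `a = ε(a₁) a₂ = ∑ⱼ ⟨eⱼ⟩ ⟨a₁ S⁻¹(fⱼ)⟩ a₂ = 0`.
-/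

open TensorProduct

open Coalgebra HopfAlgebra

theorem Coalgebra.sum_counit_right_smul {R A ι : Type*} [CommSemiring R] [AddCommMonoid A]
    [Module R A] [Coalgebra R A] {a : A} (𝓡 : Repr R a ι) :
    ∑ i ∈ 𝓡.index, counit (R := R) (𝓡.right i) • 𝓡.left i = a := by
  simpa only [map_sum, rid_tmul, one_smul] using
    congrArg (_root_.TensorProduct.rid R A) (sum_tmul_counit_eq 𝓡)

section Hopf

variable {k H : Type*} [CommSemiring k] [Semiring H] [HopfAlgebra k H]

theorem mul'_map_comul_eq_algebraMap_counit_of_inverse {T : H →ₗ[k] H}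
    (hTS : ∀ x, T (antipode k x) = x) (hST : ∀ x, antipode k (T x) = x) (x : H) :
    LinearMap.mul' k H (map T (T ∘ₗ T) (comul x)) = algebraMap k H (counit x) := by
  have hT_mul (u v : H) : T (u * v) = T v * T u := by
    rw [← hTS (T v * T u), antipode_mul_antidistrib, hST, hST]
  have hT_one : T 1 = 1 := by simpa using hTS 1
  have h : LinearMap.mul' k H ∘ₗ map T (T ∘ₗ T)
      = T ∘ₗ T ∘ₗ LinearMap.mul' k H ∘ₗ (antipode k).rTensor H :=
    TensorProduct.ext' fun u v => by simp [hT_mul, hTS]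
  rw [← LinearMap.comp_apply (LinearMap.mul' k H), h]
  simp [Algebra.algebraMap_eq_smul_one, hT_one]

def IsRightInvariant (φ : H →ₗ[k] k) : Prop :=
  ∀ a : H, TensorProduct.lid k H (map φ LinearMap.id (comul (R := k) a)) = φ a • (1 : H)

/- In Sweedler notation: `φ(b y₁) S(y₂) = φ(b₁ y₁) b₂ y₂ S(y₃) = φ(b₁ y) b₂`, the middle term
being `Θ` applied to `y₁ ⊗ y₂ ⊗ y₃`; `Ψ (u ⊗ v) = φ(b₁ u) b₂ v`. -/
theorem IsRightInvariant.lid_map_mulRight_comul {φ : H →ₗ[k] k} (hφ : IsRightInvariant φ)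
    (b y : H) :
    TensorProduct.lid k H (map (φ ∘ₗ LinearMap.mulRight k y) LinearMap.id (comul b)) =
      TensorProduct.lid k H (map (φ ∘ₗ LinearMap.mulLeft k b) (antipode k) (comul y)) := by
  set Ψ : H ⊗[k] H →ₗ[k] H :=
    TensorProduct.lid k H ∘ₗ map φ LinearMap.id ∘ₗ LinearMap.mulLeft k (comul b)
  have hΨ_comul (u : H) : Ψ (comul u) = φ (b * u) • 1 := by
    simp [Ψ, ← Bialgebra.comul_mul, hφ (b * u)]
  have hΨ_tmul (u v : H) : Ψ (u ⊗ₜ v) = Ψ (u ⊗ₜ 1) * v := by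
    simp only [Ψ, LinearMap.comp_apply, LinearMap.mulLeft_apply]
    rw [← (ℛ k b).eq]
    simp [Finset.sum_mul, map_sum]
  set Θ : (H ⊗[k] H) ⊗[k] H →ₗ[k] H := LinearMap.mul' k H ∘ₗ map Ψ (antipode k)
  have hΘ (u : H) (z : H ⊗[k] H) :
      Θ ((TensorProduct.assoc k H H H).symm (u ⊗ₜ z)) =
        Ψ (u ⊗ₜ 1) * LinearMap.mul' k H ((antipode k).lTensor H z) := by
    induction z using TensorProduct.induction_on with
    | zero => simp
    | tmul v w =>
      rw [TensorProduct.assoc_symm_tmul]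
      simp only [Θ, LinearMap.comp_apply, map_tmul, LinearMap.mul'_apply, LinearMap.lTensor_tmul]
      rw [hΨ_tmul u v, mul_assoc]
    | add z w hz hw => rw [tmul_add, map_add, map_add, hz, hw, map_add, map_add, mul_add]
  calc TensorProduct.lid k H (map (φ ∘ₗ LinearMap.mulRight k y) LinearMap.id (comul b))
      = Ψ (y ⊗ₜ 1) := by
        simp only [Ψ, LinearMap.comp_apply, LinearMap.mulLeft_apply]
        rw [← (ℛ k b).eq]
        simp [Finset.sum_mul, map_sum]
    _ = Θ ((TensorProduct.assoc k H H H).symm ((comul (R := k)).lTensor H (comul y))) := by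
        rw [← (ℛ k y).eq]
        simp only [map_sum, LinearMap.lTensor_tmul, hΘ, mul_antipode_lTensor_comul_apply]
        conv_lhs => rw [← sum_counit_right_smul (ℛ k y)]
        simp only [sum_tmul, map_sum, Algebra.algebraMap_eq_smul_one, mul_smul_comm, mul_one]
        exact Finset.sum_congr rfl fun i _ => by rw [← smul_tmul', map_smul]
    _ = Θ ((comul (R := k)).rTensor H (comul y)) := by rw [coassoc_symm_apply]
    _ = TensorProduct.lid k H (map (φ ∘ₗ LinearMap.mulLeft k b) (antipode k) (comul y)) := by
        rw [← (ℛ k y).eq]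
        simp [map_sum, Θ, hΨ_comul]

end Hopf

namespace PairedHopf

variable {k U A ι : Type*} [Field k] [Ring U] [Ring A] [HopfAlgebra k U] [HopfAlgebra k A]
  [Fintype ι] [DecidableEq ι] (P : PairedHopf k U A ι)
  {M : Type*} [AddCommGroup M] [Module k M]

theorem sum_pair_smul_map_f (g : A →ₗ[k] M) (c : A) :
    ∑ i, P.pair (P.e i) c • g (P.f i) = g c := by
  conv_rhs => rw [← P.expand_A c]
  simp only [map_sum, map_smul]

theorem sum_pair_smul_map_e (g : U →ₗ[k] M) (x : U) :
    ∑ i, P.pair x (P.f i) • g (P.e i) = g x := by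
  conv_rhs => rw [← P.expand_U x]
  simp only [map_sum, map_smul]

theorem pair_SinvU (x : U) (c : A) : P.pair (P.SinvU x) c = P.pair x (P.SinvA c) := by
  conv_lhs => rw [← P.antipode_SinvA c]
  rw [← P.pair_antipode, P.antipode_SinvU]

theorem sum_apply_e_SinvA_f (G : U →ₗ[k] A →ₗ[k] M) :
    ∑ j, G (P.e j) (P.SinvA (P.f j)) = ∑ j, G (P.SinvU (P.e j)) (P.f j) := by
  calc ∑ j, G (P.e j) (P.SinvA (P.f j))
      = ∑ j, ∑ p, P.pair (P.SinvU (P.e p)) (P.f j) • G (P.e j) (P.f p) := by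
        refine Finset.sum_congr rfl fun j _ => ?_
        rw [← P.sum_pair_smul_map_f (G (P.e j)) (P.SinvA (P.f j))]
        simp only [pair_SinvU]
    _ = ∑ p, ∑ j, P.pair (P.SinvU (P.e p)) (P.f j) • G.flip (P.f p) (P.e j) := Finset.sum_comm
    _ = ∑ j, G (P.SinvU (P.e j)) (P.f j) :=
        Finset.sum_congr rfl fun p _ => P.sum_pair_smul_map_e (G.flip (P.f p)) _

theorem sum_pair_mul_smul_tmul (x : U) :
    ∑ p, ∑ q, P.pair x (P.f p * P.f q) • (P.e p ⊗ₜ[k] P.e q) = comul (R := k) x := by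
  simp only [P.pair_mul_right]
  generalize comul (R := k) x = z
  induction z using TensorProduct.induction_on with
  | zero => simp
  | tmul u v =>
    simp only [LinearMap.comp_apply, TensorProduct.map_tmul, LinearMap.mul'_apply,
      LinearMap.flip_apply]
    conv_rhs => rw [← P.expand_U u, ← P.expand_U v]
    simp only [sum_tmul, tmul_sum, smul_tmul_smul]
    exact Finset.sum_comm
  | add z w hz hw => simp only [map_add, add_smul, Finset.sum_add_distrib, hz, hw]

theorem sum_apply_tmul_mul (G : U ⊗[k] U →ₗ[k] A →ₗ[k] M) :
    ∑ p, ∑ q, G (P.e p ⊗ₜ P.e q) (P.f p * P.f q) = ∑ m, G (comul (R := k) (P.e m)) (P.f m) := by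
  calc ∑ p, ∑ q, G (P.e p ⊗ₜ P.e q) (P.f p * P.f q)
      = ∑ p, ∑ q, ∑ m, P.pair (P.e m) (P.f p * P.f q) • G (P.e p ⊗ₜ P.e q) (P.f m) := by
        simp only [P.sum_pair_smul_map_f]
    _ = ∑ m, ∑ p, ∑ q, P.pair (P.e m) (P.f p * P.f q) • G (P.e p ⊗ₜ P.e q) (P.f m) := by
        conv_lhs => enter [2, p]; rw [Finset.sum_comm]
        rw [Finset.sum_comm]
    _ = ∑ m, G (comul (R := k) (P.e m)) (P.f m) := by
        simp only [← P.sum_pair_mul_smul_tmul, map_sum, map_smul, LinearMap.sum_apply,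
          LinearMap.smul_apply]

theorem counit_eq_sum_integral_mul_SinvA (Int : A →ₗ[k] k) (IntU : U →ₗ[k] k)
    (htrace : ∀ (x : U) (a : A),
      IntU x * Int a = ∑ i, P.pair (x * P.SinvU (P.SinvU (P.e i))) (a * P.f i))
    (b : A) :
    counit (R := k) b = ∑ j, IntU (P.e j) * Int (b * P.SinvA (P.f j)) := by
  set T := P.SinvU
  symm
  calc ∑ j, IntU (P.e j) * Int (b * P.SinvA (P.f j))
      = ∑ i, ∑ j, P.pair (P.e j * T (T (P.e i))) (b * P.SinvA (P.f j) * P.f i) := by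
        simp only [htrace]
        exact Finset.sum_comm
    _ = ∑ i, ∑ j, P.pair (T (P.e j) * T (T (P.e i))) (b * P.f j * P.f i) :=
        Finset.sum_congr rfl fun i _ => P.sum_apply_e_SinvA_f
          ((P.pair ∘ₗ LinearMap.mulRight k (T (T (P.e i)))).compl₂
            (LinearMap.mulRight k (P.f i) ∘ₗ LinearMap.mulLeft k b))
    _ = ∑ j, ∑ i, P.pair (LinearMap.mul' k U (map T (T ∘ₗ T) (P.e j ⊗ₜ P.e i)))
          (b * (P.f j * P.f i)) := by
        rw [Finset.sum_comm]
        simp [mul_assoc]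
    _ = ∑ m, P.pair (LinearMap.mul' k U (map T (T ∘ₗ T) (comul (R := k) (P.e m))))
          (b * P.f m) :=
        P.sum_apply_tmul_mul ((P.pair ∘ₗ LinearMap.mul' k U ∘ₗ map T (T ∘ₗ T)).compl₂
          (LinearMap.mulLeft k b))
    _ = ∑ m, P.pair (P.e m) 1 • counit (R := k) (b * P.f m) := by
        simp [T, mul'_map_comul_eq_algebraMap_counit_of_inverse P.SinvU_antipode
          P.antipode_SinvU, Algebra.algebraMap_eq_smul_one, P.pair_one_left, P.pair_one_right]
    _ = counit (R := k) b := by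
        simpa using P.sum_pair_smul_map_f (counit (R := k) ∘ₗ LinearMap.mulLeft k b) 1

end PairedHopf

open Coalgebra in
theorem integral_nondegenerate_general
    {k U A ι : Type*} [Field k] [Ring U] [Ring A]
    [HopfAlgebra k U] [HopfAlgebra k A] [Fintype ι] [DecidableEq ι]
    (P : PairedHopf k U A ι)
    (Int : A →ₗ[k] k) (IntU : U →ₗ[k] k)
    (hinv : ∀ a : A,
      (TensorProduct.lid k A) (TensorProduct.map Int LinearMap.id (comul (R := k) a)) =
        Int a • (1 : A))
    (htrace : ∀ (x : U) (a : A),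
      IntU x * Int a = ∑ i, P.pair (x * P.SinvU (P.SinvU (P.e i))) (a * P.f i))
    (a : A) (ha : ∀ i, Int (a * P.f i) = 0) :
    a = 0 := by
  have hzero : Int ∘ₗ LinearMap.mulLeft k a = 0 := LinearMap.ext fun c => by
    simpa [ha] using (P.sum_pair_smul_map_f (Int ∘ₗ LinearMap.mulLeft k a) c).symm
  set 𝓡 := ℛ k a
  calc a = ∑ i ∈ 𝓡.index, counit (R := k) (𝓡.left i) • 𝓡.right i := (sum_counit_smul 𝓡).symm
    _ = ∑ j, IntU (P.e j) • ∑ i ∈ 𝓡.index, Int (𝓡.left i * P.SinvA (P.f j)) • 𝓡.right i := by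
        simp only [P.counit_eq_sum_integral_mul_SinvA Int IntU htrace, Finset.sum_smul,
          Finset.smul_sum, smul_smul]
        exact Finset.sum_comm
    _ = ∑ j, IntU (P.e j) • TensorProduct.lid k A
          (map (Int ∘ₗ LinearMap.mulRight k (P.SinvA (P.f j))) LinearMap.id (comul a)) := by
        simp [← 𝓡.eq, map_sum]
    _ = ∑ j, IntU (P.e j) • TensorProduct.lid k A
          (map (Int ∘ₗ LinearMap.mulLeft k a) (antipode k) (comul (P.SinvA (P.f j)))) := by
        simp only [IsRightInvariant.lid_map_mulRight_comul hinv]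
    _ = 0 := by simp [hzero]

open Coalgebra in
/-- Nondegeneracy of the integral: let `Int` be a right invariant integral on the
finite-dimensional Hopf algebra `A` and `IntU` the corresponding integral on `U` (related by
the modified trace formula `IntU x * Int a = ∑ i ⟨x S⁻²(e i), a f i⟩`), normalized so that
`∑ i, IntU (e i) * Int (S⁻¹ (f i)) = 1`. If `Int (a * f i) = 0` for all `i` then `a = 0`. -/
theorem integral_nondegenerate
    {k U A ι : Type*} [Field k] [Ring U] [Ring A]
    [HopfAlgebra k U] [HopfAlgebra k A] [Fintype ι] [DecidableEq ι]
    (P : PairedHopf k U A ι)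
    (Int : A →ₗ[k] k) (IntU : U →ₗ[k] k)
    (hinv : ∀ a : A,
      (TensorProduct.lid k A) (TensorProduct.map Int LinearMap.id (comul (R := k) a)) =
        Int a • (1 : A))
    (htrace : ∀ (x : U) (a : A),
      IntU x * Int a = ∑ i, P.pair (x * P.SinvU (P.SinvU (P.e i))) (a * P.f i))
    (hnorm : ∑ i, IntU (P.e i) * Int (P.SinvA (P.f i)) = 1)
    (a : A) (ha : ∀ i, Int (a * P.f i) = 0) :
    a = 0 :=
  integral_nondegenerate_general P Int IntU hinv htrace a ha
end

section
/- The right Fourier transform turns right convolution into multiplication: F(f ⋆ g) = F(f)·F(g), where f ⋆ g := g_{(1)} ∫(f S^{-1}(g_{(2)})). -/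
open TensorProduct

section Helpers

open Coalgebra HopfAlgebra

variable {R H : Type*} [CommSemiring R] [Semiring H] [HopfAlgebra R H]

lemma repr_counit_smul_right {a : H} {ιr : Type*} (r : Repr R a ιr) :
    ∑ i ∈ r.index, counit (R := R) (r.left i) • r.right i = a := by
  have h := Coalgebra.sum_counit_tmul_eq r
  apply_fun TensorProduct.lid R H at h
  simp only [map_sum, TensorProduct.lid_tmul, one_smul] at h
  exact h

lemma repr_counit_smul_left {a : H} {ιr : Type*} (r : Repr R a ιr) :
    ∑ i ∈ r.index, counit (R := R) (r.right i) • r.left i = a := by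
  have h := Coalgebra.sum_tmul_counit_eq r
  apply_fun TensorProduct.rid R H at h
  simp only [map_sum, TensorProduct.rid_tmul, one_smul] at h
  exact h

/-- A representation of `comul (a*b)` from representations of `comul a` and `comul b`. -/
noncomputable def reprMul {a b : H} {ιa ιb : Type*} (ra : Repr R a ιa) (rb : Repr R b ιb) :
    Repr R (a * b) (ιa × ιb) where
  index := ra.index ×ˢ rb.index
  left := fun p => ra.left p.1 * rb.left p.2
  right := fun p => ra.right p.1 * rb.right p.2
  eq := by
    rw [Finset.sum_product]
    rw [show comul (R := R) (a * b) = comul a * comul b from Bialgebra.comul_mul a b,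
      ← ra.eq, ← rb.eq, Finset.sum_mul_sum]
    simp [Algebra.TensorProduct.tmul_mul_tmul]

lemma repr_transfer {M : Type*} [AddCommMonoid M] [Module R M]
    (Ψ : H ⊗[R] (H ⊗[R] H) →ₗ[R] M) {a : H} {ιr κ Λ : Type*} (r : Repr R a ιr)
    (sL : ∀ i : r.ι, Repr R (r.left i) κ) (sR : ∀ i : r.ι, Repr R (r.right i) Λ) :
    ∑ i ∈ r.index, ∑ j ∈ (sR i).index,
        Ψ (r.left i ⊗ₜ[R] ((sR i).left j ⊗ₜ[R] (sR i).right j))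
      = ∑ i ∈ r.index, ∑ j ∈ (sL i).index,
        Ψ ((sL i).left j ⊗ₜ[R] ((sL i).right j ⊗ₜ[R] r.right i)) := by
  have h := Coalgebra.sum_tmul_tmul_eq r sL sR
  apply_fun Ψ at h
  simp only [map_sum] at h
  exact h.symm

lemma sum4_comm {M : Type*} [AddCommMonoid M] {α β : Type*} {γ : α → Type*} {δ : β → Type*}
    (sa : Finset α) (sb : Finset β) (sg : ∀ i, Finset (γ i)) (sd : ∀ m, Finset (δ m))
    (F : ∀ i : α, γ i → ∀ m : β, δ m → M) :
    (∑ i ∈ sa, ∑ j ∈ sg i, ∑ m ∈ sb, ∑ n ∈ sd m, F i j m n)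
      = ∑ m ∈ sb, ∑ n ∈ sd m, ∑ i ∈ sa, ∑ j ∈ sg i, F i j m n := by
  calc (∑ i ∈ sa, ∑ j ∈ sg i, ∑ m ∈ sb, ∑ n ∈ sd m, F i j m n)
      = ∑ i ∈ sa, ∑ m ∈ sb, ∑ j ∈ sg i, ∑ n ∈ sd m, F i j m n :=
        Finset.sum_congr rfl fun i _ => Finset.sum_comm
    _ = ∑ m ∈ sb, ∑ i ∈ sa, ∑ j ∈ sg i, ∑ n ∈ sd m, F i j m n := Finset.sum_comm
    _ = ∑ m ∈ sb, ∑ i ∈ sa, ∑ n ∈ sd m, ∑ j ∈ sg i, F i j m n :=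
        Finset.sum_congr rfl fun m _ => Finset.sum_congr rfl fun i _ => Finset.sum_comm
    _ = ∑ m ∈ sb, ∑ n ∈ sd m, ∑ i ∈ sa, ∑ j ∈ sg i, F i j m n :=
        Finset.sum_congr rfl fun m _ => Finset.sum_comm

lemma antipode_one' : antipode (R := R) (1 : H) = 1 := by
  have h := HopfAlgebra.mul_antipode_rTensor_comul_apply (R := R) (a := (1 : H))
  simpa [Algebra.TensorProduct.one_def] using h

lemma counit_antipode' (a : H) :
    counit (R := R) (antipode (R := R) a) = counit a := by
  obtain ⟨r⟩ : Nonempty (Repr R a (H × H)) := ⟨Repr.arbitrary R a⟩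
  have h1 := HopfAlgebra.sum_antipode_mul_eq_algebraMap_counit (R := R) r
  apply_fun (counit (R := R)) at h1
  rw [map_sum] at h1
  simp only [Bialgebra.counit_mul, Bialgebra.counit_algebraMap] at h1
  calc counit (R := R) (antipode (R := R) a)
      = counit (R := R) (antipode (R := R)
          (∑ i ∈ r.index, counit (R := R) (r.right i) • r.left i)) := by
        rw [repr_counit_smul_left]
    _ = ∑ i ∈ r.index, counit (R := R) (antipode (R := R) (r.left i))
          * counit (R := R) (r.right i) := by
        rw [map_sum, map_sum]
        refine Finset.sum_congr rfl fun i _ => ?_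
        simp [mul_comm]
    _ = counit a := h1

lemma antipode_mul' (a b : H) :
    antipode (R := R) (a * b) = antipode (R := R) b * antipode (R := R) a := by
  classical
  set S' : H →ₗ[R] H := antipode (R := R) with hS'
  let ra := Repr.arbitrary R a
  let rb := Repr.arbitrary R b
  let raL : ∀ i : ra.ι, Repr R (ra.left i) (H × H) := fun _ => Repr.arbitrary R _
  let raR : ∀ i : ra.ι, Repr R (ra.right i) (H × H) := fun _ => Repr.arbitrary R _
  let rbL : ∀ m : rb.ι, Repr R (rb.left m) (H × H) := fun _ => Repr.arbitrary R _
  let rbR : ∀ m : rb.ι, Repr R (rb.right m) (H × H) := fun _ => Repr.arbitrary R _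
  -- the four-fold sum E, with the a-triple and b-triple both right-nested
  have hxb : ∀ x : H,
      (∑ m ∈ rb.index, counit (R := R) (rb.right m) • S' (x * rb.left m)) = S' (x * b) := by
    intro x
    calc (∑ m ∈ rb.index, counit (R := R) (rb.right m) • S' (x * rb.left m))
        = S' (x * ∑ m ∈ rb.index, counit (R := R) (rb.right m) • rb.left m) := by
          rw [Finset.mul_sum, map_sum]
          exact Finset.sum_congr rfl fun m _ => by rw [mul_smul_comm, map_smul]
      _ = S' (x * b) := by rw [repr_counit_smul_left rb]
  have hab :
      (∑ i ∈ ra.index, counit (R := R) (ra.right i) • S' (ra.left i * b)) = S' (a * b) := by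
    calc (∑ i ∈ ra.index, counit (R := R) (ra.right i) • S' (ra.left i * b))
        = S' ((∑ i ∈ ra.index, counit (R := R) (ra.right i) • ra.left i) * b) := by
          rw [Finset.sum_mul, map_sum]
          exact Finset.sum_congr rfl fun i _ => by rw [smul_mul_assoc, map_smul]
      _ = S' (a * b) := by rw [repr_counit_smul_left ra]
  have claim1 :
      (∑ i ∈ ra.index, ∑ j ∈ (raR i).index, ∑ m ∈ rb.index, ∑ n ∈ (rbR m).index,
        S' (ra.left i * rb.left m) *
          (((raR i).left j * (rbR m).left n) *
            (S' ((rbR m).right n) * S' ((raR i).right j))))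
      = S' (a * b) := by
    have step : ∀ i ∈ ra.index, ∀ j ∈ (raR i).index, ∀ m ∈ rb.index,
        (∑ n ∈ (rbR m).index,
          S' (ra.left i * rb.left m) *
            (((raR i).left j * (rbR m).left n) *
              (S' ((rbR m).right n) * S' ((raR i).right j))))
        = counit (R := R) (rb.right m) •
            (S' (ra.left i * rb.left m) * ((raR i).left j * S' ((raR i).right j))) := by
      intro i _ j _ m _
      have hn := HopfAlgebra.sum_mul_antipode_eq_algebraMap_counit (R := R) (rbR m)
      calc (∑ n ∈ (rbR m).index,
            S' (ra.left i * rb.left m) *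
              (((raR i).left j * (rbR m).left n) *
                (S' ((rbR m).right n) * S' ((raR i).right j))))
          = S' (ra.left i * rb.left m) * ((raR i).left j *
              ((∑ n ∈ (rbR m).index, (rbR m).left n * S' ((rbR m).right n)) *
                S' ((raR i).right j))) := by
            rw [Finset.sum_mul, Finset.mul_sum, Finset.mul_sum]
            refine Finset.sum_congr rfl fun n _ => ?_
            simp only [mul_assoc]
        _ = _ := by
            rw [hn, Algebra.algebraMap_eq_smul_one, smul_mul_assoc, one_mul,
              mul_smul_comm, mul_smul_comm]
    calc (∑ i ∈ ra.index, ∑ j ∈ (raR i).index, ∑ m ∈ rb.index, ∑ n ∈ (rbR m).index,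
          S' (ra.left i * rb.left m) *
            (((raR i).left j * (rbR m).left n) *
              (S' ((rbR m).right n) * S' ((raR i).right j))))
        = ∑ i ∈ ra.index, ∑ j ∈ (raR i).index, ∑ m ∈ rb.index,
            counit (R := R) (rb.right m) •
              (S' (ra.left i * rb.left m) * ((raR i).left j * S' ((raR i).right j))) := by
          refine Finset.sum_congr rfl fun i hi => Finset.sum_congr rfl fun j hj =>
            Finset.sum_congr rfl fun m hm => step i hi j hj m hm
      _ = ∑ i ∈ ra.index, ∑ j ∈ (raR i).index,
            S' (ra.left i * b) * ((raR i).left j * S' ((raR i).right j)) := by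
          refine Finset.sum_congr rfl fun i _ => Finset.sum_congr rfl fun j _ => ?_
          rw [← hxb (ra.left i), Finset.sum_mul]
          exact Finset.sum_congr rfl fun m _ => (smul_mul_assoc _ _ _).symm
      _ = ∑ i ∈ ra.index, counit (R := R) (ra.right i) • S' (ra.left i * b) := by
          refine Finset.sum_congr rfl fun i _ => ?_
          rw [← Finset.mul_sum, HopfAlgebra.sum_mul_antipode_eq_algebraMap_counit (R := R) (raR i),
            Algebra.algebraMap_eq_smul_one, mul_smul_comm, mul_one]
      _ = S' (a * b) := hab
  have claim2 :
      (∑ i ∈ ra.index, ∑ j ∈ (raR i).index, ∑ m ∈ rb.index, ∑ n ∈ (rbR m).index,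
        S' (ra.left i * rb.left m) *
          (((raR i).left j * (rbR m).left n) *
            (S' ((rbR m).right n) * S' ((raR i).right j))))
      = S' b * S' a := by
    calc (∑ i ∈ ra.index, ∑ j ∈ (raR i).index, ∑ m ∈ rb.index, ∑ n ∈ (rbR m).index,
          S' (ra.left i * rb.left m) *
            (((raR i).left j * (rbR m).left n) *
              (S' ((rbR m).right n) * S' ((raR i).right j))))
        = ∑ m ∈ rb.index, ∑ n ∈ (rbR m).index, ∑ i ∈ ra.index, ∑ j ∈ (raR i).index,
            S' (ra.left i * rb.left m) *
              (((raR i).left j * (rbR m).left n) *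
                (S' ((rbR m).right n) * S' ((raR i).right j))) :=
          sum4_comm _ _ _ _ _
      _ = ∑ m ∈ rb.index, ∑ n ∈ (rbR m).index, ∑ i ∈ ra.index, ∑ j ∈ (raL i).index,
            S' ((raL i).left j * rb.left m) *
              ((((raL i).right j) * (rbR m).left n) *
                (S' ((rbR m).right n) * S' (ra.right i))) := by
          refine Finset.sum_congr rfl fun m _ => Finset.sum_congr rfl fun n _ => ?_
          have ht := repr_transfer
            (LinearMap.mul' R H ∘ₗ
              TensorProduct.map (S' ∘ₗ LinearMap.mulRight R (rb.left m))
                (LinearMap.mul' R H ∘ₗ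
                  TensorProduct.map (LinearMap.mulRight R ((rbR m).left n))
                    (LinearMap.mulLeft R (S' ((rbR m).right n)) ∘ₗ S')))
            ra raL raR
          simpa only [LinearMap.coe_comp, Function.comp_apply, TensorProduct.map_tmul,
            LinearMap.mul'_apply, LinearMap.mulLeft_apply, LinearMap.mulRight_apply] using ht
      _ = ∑ i ∈ ra.index, ∑ j ∈ (raL i).index, ∑ m ∈ rb.index, ∑ n ∈ (rbR m).index,
            S' ((raL i).left j * rb.left m) *
              ((((raL i).right j) * (rbR m).left n) *
                (S' ((rbR m).right n) * S' (ra.right i))) :=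
          (sum4_comm _ _ _ _ _).symm
      _ = ∑ i ∈ ra.index, ∑ j ∈ (raL i).index, ∑ m ∈ rb.index, ∑ n ∈ (rbL m).index,
            S' ((raL i).left j * (rbL m).left n) *
              ((((raL i).right j) * (rbL m).right n) *
                (S' (rb.right m) * S' (ra.right i))) := by
          refine Finset.sum_congr rfl fun i _ => Finset.sum_congr rfl fun j _ => ?_
          have ht := repr_transfer
            (LinearMap.mul' R H ∘ₗ
              TensorProduct.map (S' ∘ₗ LinearMap.mulLeft R ((raL i).left j))
                (LinearMap.mul' R H ∘ₗ
                  TensorProduct.map (LinearMap.mulLeft R ((raL i).right j))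
                    (LinearMap.mulRight R (S' (ra.right i)) ∘ₗ S')))
            rb rbL rbR
          simpa only [LinearMap.coe_comp, Function.comp_apply, TensorProduct.map_tmul,
            LinearMap.mul'_apply, LinearMap.mulLeft_apply, LinearMap.mulRight_apply] using ht
      _ = ∑ i ∈ ra.index, ∑ m ∈ rb.index,
            (counit (R := R) (ra.left i) * counit (R := R) (rb.left m)) •
              (S' (rb.right m) * S' (ra.right i)) := by
          refine Finset.sum_congr rfl fun i _ => ?_
          rw [Finset.sum_comm]
          refine Finset.sum_congr rfl fun m _ => ?_
          have hprod := HopfAlgebra.sum_antipode_mul_eq_algebraMap_counit (R := R) (reprMul (raL i) (rbL m))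
          rw [reprMul, Finset.sum_product] at hprod
          calc (∑ j ∈ (raL i).index, ∑ n ∈ (rbL m).index,
                S' ((raL i).left j * (rbL m).left n) *
                  ((((raL i).right j) * (rbL m).right n) *
                    (S' (rb.right m) * S' (ra.right i))))
              = (∑ j ∈ (raL i).index, ∑ n ∈ (rbL m).index,
                  S' ((raL i).left j * (rbL m).left n) *
                    (((raL i).right j) * (rbL m).right n)) *
                    (S' (rb.right m) * S' (ra.right i)) := by
                rw [Finset.sum_mul]
                refine Finset.sum_congr rfl fun j _ => ?_
                rw [Finset.sum_mul]
                exact Finset.sum_congr rfl fun n _ => (mul_assoc _ _ _).symm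
            _ = (counit (R := R) (ra.left i) * counit (R := R) (rb.left m)) •
                  (S' (rb.right m) * S' (ra.right i)) := by
                rw [hprod, Bialgebra.counit_mul, Algebra.algebraMap_eq_smul_one,
                  smul_mul_assoc, one_mul]
      _ = S' b * S' a := by
          calc (∑ i ∈ ra.index, ∑ m ∈ rb.index,
                (counit (R := R) (ra.left i) * counit (R := R) (rb.left m)) •
                  (S' (rb.right m) * S' (ra.right i)))
              = ∑ i ∈ ra.index, counit (R := R) (ra.left i) •
                  ((∑ m ∈ rb.index, counit (R := R) (rb.left m) • S' (rb.right m)) *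
                    S' (ra.right i)) := by
                refine Finset.sum_congr rfl fun i _ => ?_
                rw [Finset.sum_mul, Finset.smul_sum]
                refine Finset.sum_congr rfl fun m _ => ?_
                rw [smul_mul_assoc, ← mul_smul]
            _ = S' b * S' a := by
                have hb : (∑ m ∈ rb.index, counit (R := R) (rb.left m) • S' (rb.right m))
                    = S' b := by
                  calc (∑ m ∈ rb.index, counit (R := R) (rb.left m) • S' (rb.right m))
                      = S' (∑ m ∈ rb.index, counit (R := R) (rb.left m) • rb.right m) := by
                        rw [map_sum]
                        exact Finset.sum_congr rfl fun m _ => (map_smul _ _ _).symm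
                    _ = S' b := by rw [repr_counit_smul_right rb]
                rw [hb]
                calc (∑ i ∈ ra.index, counit (R := R) (ra.left i) • (S' b * S' (ra.right i)))
                    = S' b * ∑ i ∈ ra.index, counit (R := R) (ra.left i) • S' (ra.right i) := by
                      rw [Finset.mul_sum]
                      exact Finset.sum_congr rfl fun i _ => (mul_smul_comm _ _ _).symm
                  _ = S' b * S' a := by
                      congr 1
                      calc (∑ i ∈ ra.index, counit (R := R) (ra.left i) • S' (ra.right i))
                          = S' (∑ i ∈ ra.index, counit (R := R) (ra.left i) • ra.right i) := by
                            rw [map_sum]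
                            exact Finset.sum_congr rfl fun i _ => (map_smul _ _ _).symm
                        _ = S' a := by rw [repr_counit_smul_right ra]
  exact claim1.symm.trans claim2

end Helpers

section Paired

open Coalgebra HopfAlgebra

variable {k U A ι : Type*} [Field k] [Ring U] [Ring A]
    [HopfAlgebra k U] [HopfAlgebra k A] [Fintype ι] [DecidableEq ι]
    (P : PairedHopf k U A ι)

lemma ph_sinvA_one : P.SinvA 1 = 1 := by
  have h := P.SinvA_antipode 1
  rwa [antipode_one'] at h

lemma ph_pair_sinv (x : U) (a : A) : P.pair (P.SinvU x) a = P.pair x (P.SinvA a) := by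
  have h := P.pair_antipode (P.SinvU x) (P.SinvA a)
  rw [P.antipode_SinvU, P.antipode_SinvA] at h
  exact h.symm

lemma ph_sinvU_mul (x y : U) : P.SinvU (x * y) = P.SinvU y * P.SinvU x := by
  have h : antipode (R := k) (P.SinvU y * P.SinvU x) = x * y := by
    rw [antipode_mul', P.antipode_SinvU, P.antipode_SinvU]
  rw [← h, P.SinvU_antipode]

lemma ph_counit_sinvA (a : A) : counit (R := k) (P.SinvA a) = counit (R := k) a := by
  conv_rhs => rw [← P.antipode_SinvA a, counit_antipode']

lemma ph_sinv_mul_left {a : A} {ιr : Type*} (r : Repr k a ιr) :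
    (∑ i ∈ r.index, P.SinvA (r.right i) * r.left i) = counit (R := k) a • (1 : A) := by
  have hS : antipode (R := k) (∑ i ∈ r.index, P.SinvA (r.right i) * r.left i)
      = counit (R := k) a • (1 : A) := by
    rw [map_sum]
    calc (∑ i ∈ r.index, antipode (R := k) (P.SinvA (r.right i) * r.left i))
        = ∑ i ∈ r.index, antipode (R := k) (r.left i) * r.right i := by
          refine Finset.sum_congr rfl fun i _ => ?_
          rw [antipode_mul', P.antipode_SinvA]
      _ = counit (R := k) a • (1 : A) := by
          rw [HopfAlgebra.sum_antipode_mul_eq_algebraMap_counit r, Algebra.algebraMap_eq_smul_one]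
  calc (∑ i ∈ r.index, P.SinvA (r.right i) * r.left i)
      = P.SinvA (antipode (R := k) (∑ i ∈ r.index, P.SinvA (r.right i) * r.left i)) :=
        (P.SinvA_antipode _).symm
    _ = counit (R := k) a • (1 : A) := by rw [hS, map_smul, ph_sinvA_one]

lemma ph_expand_A2 (t : A ⊗[k] A) :
    (∑ i, ∑ j, (LinearMap.mul' k k
        (TensorProduct.map (P.pair (P.e i)) (P.pair (P.e j)) t)) • (P.f i ⊗ₜ[k] P.f j)) = t := by
  induction t using TensorProduct.induction_on with
  | zero => simp
  | tmul a b =>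
    simp only [TensorProduct.map_tmul, LinearMap.mul'_apply]
    calc (∑ i, ∑ j, (P.pair (P.e i) a * P.pair (P.e j) b) • (P.f i ⊗ₜ[k] P.f j))
        = ∑ i, (P.pair (P.e i) a) • (P.f i ⊗ₜ[k] ∑ j, (P.pair (P.e j) b) • P.f j) := by
          refine Finset.sum_congr rfl fun i _ => ?_
          rw [TensorProduct.tmul_sum, Finset.smul_sum]
          refine Finset.sum_congr rfl fun j _ => ?_
          rw [mul_smul, TensorProduct.tmul_smul]
      _ = a ⊗ₜ[k] b := by
          rw [P.expand_A b]
          calc (∑ i, (P.pair (P.e i) a) • (P.f i ⊗ₜ[k] b))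
              = (∑ i, (P.pair (P.e i) a) • P.f i) ⊗ₜ[k] b := by
                rw [TensorProduct.sum_tmul]
                exact Finset.sum_congr rfl fun i _ => by
                  rw [TensorProduct.smul_tmul']
            _ = a ⊗ₜ[k] b := by rw [P.expand_A a]
  | add u v hu hv =>
    simp only [map_add, add_smul, Finset.sum_add_distrib, hu, hv]

lemma ph_comul_sinvA (a : A) :
    comul (R := k) (P.SinvA a) =
      TensorProduct.map P.SinvA P.SinvA ((TensorProduct.comm k A A) (comul (R := k) a)) := by
  have key : ∀ (x y : U) (t : A ⊗[k] A),
      LinearMap.mul' k k (TensorProduct.map (P.pair x) (P.pair y)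
          (TensorProduct.map P.SinvA P.SinvA ((TensorProduct.comm k A A) t)))
        = LinearMap.mul' k k
            (TensorProduct.map (P.pair (P.SinvU y)) (P.pair (P.SinvU x)) t) := by
    intro x y t
    induction t using TensorProduct.induction_on with
    | zero => simp
    | tmul c d =>
      simp only [TensorProduct.comm_tmul, TensorProduct.map_tmul, LinearMap.mul'_apply,
        ph_pair_sinv]
      exact mul_comm _ _
    | add u v hu hv => simp only [map_add, hu, hv]
  have heval : ∀ (x y : U),
      LinearMap.mul' k k (TensorProduct.map (P.pair x) (P.pair y)
          (comul (R := k) (P.SinvA a)))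
        = LinearMap.mul' k k (TensorProduct.map (P.pair x) (P.pair y)
            (TensorProduct.map P.SinvA P.SinvA
              ((TensorProduct.comm k A A) (comul (R := k) a)))) := by
    intro x y
    rw [key]
    have h1 := P.pair_mul_left x y (P.SinvA a)
    have h2 := P.pair_mul_left (P.SinvU y) (P.SinvU x) a
    simp only [LinearMap.coe_comp, Function.comp_apply] at h1 h2
    rw [← h1, ← h2, ← ph_pair_sinv, ph_sinvU_mul]
  calc comul (R := k) (P.SinvA a)
      = ∑ i, ∑ j, (LinearMap.mul' k k
          (TensorProduct.map (P.pair (P.e i)) (P.pair (P.e j))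
            (comul (R := k) (P.SinvA a)))) • (P.f i ⊗ₜ[k] P.f j) :=
        (ph_expand_A2 P _).symm
    _ = ∑ i, ∑ j, (LinearMap.mul' k k
          (TensorProduct.map (P.pair (P.e i)) (P.pair (P.e j))
            (TensorProduct.map P.SinvA P.SinvA
              ((TensorProduct.comm k A A) (comul (R := k) a))))) • (P.f i ⊗ₜ[k] P.f j) := by
        refine Finset.sum_congr rfl fun i _ => Finset.sum_congr rfl fun j _ => ?_
        rw [heval]
    _ = _ := ph_expand_A2 P _

end Paired
section Star

open Coalgebra HopfAlgebra

variable {k U A ι : Type*} [Field k] [Ring U] [Ring A]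
    [HopfAlgebra k U] [HopfAlgebra k A] [Fintype ι] [DecidableEq ι]
    (P : PairedHopf k U A ι)

lemma ph_star (Int : A →ₗ[k] k)
    (hinv : ∀ a : A, (TensorProduct.lid k A)
        (TensorProduct.map Int LinearMap.id (comul (R := k) a)) = Int a • (1 : A))
    (g a : A) {ιg ιa : Type*} (rg : Repr k g ιg) (ra : Repr k a ιa) :
    (∑ i ∈ rg.index, Int (rg.left i * P.SinvA a) • rg.right i)
      = ∑ t ∈ ra.index, Int (g * P.SinvA (ra.right t)) • ra.left t := by
  classical
  let rr : ∀ t : ra.ι, Repr k (ra.right t) (A × A) := fun _ => Repr.arbitrary k _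
  let rl : ∀ t : ra.ι, Repr k (ra.left t) (A × A) := fun _ => Repr.arbitrary k _
  have hcm : ∀ t : ra.ι, comul (R := k) (g * P.SinvA (ra.right t))
      = ∑ i ∈ rg.index, ∑ s ∈ (rr t).index,
          (rg.left i * P.SinvA ((rr t).right s)) ⊗ₜ[k]
            (rg.right i * P.SinvA ((rr t).left s)) := by
    intro t
    rw [show comul (R := k) (g * P.SinvA (ra.right t))
        = comul (R := k) g * comul (R := k) (P.SinvA (ra.right t)) from
      Bialgebra.comul_mul _ _]
    rw [ph_comul_sinvA, ← (rr t).eq, ← rg.eq]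
    rw [map_sum, map_sum]
    simp only [TensorProduct.comm_tmul, TensorProduct.map_tmul]
    rw [Finset.sum_mul_sum]
    simp only [Algebra.TensorProduct.tmul_mul_tmul]
  have step2 : ∀ t : ra.ι,
      Int (g * P.SinvA (ra.right t)) • ra.left t
        = ∑ i ∈ rg.index, ∑ s ∈ (rr t).index,
            Int (rg.left i * P.SinvA ((rr t).right s)) •
              (rg.right i * (P.SinvA ((rr t).left s) * ra.left t)) := by
    intro t
    have h := hinv (g * P.SinvA (ra.right t))
    rw [hcm t] at h
    simp only [map_sum, TensorProduct.map_tmul, LinearMap.id_coe, id_eq,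
      TensorProduct.lid_tmul] at h
    calc Int (g * P.SinvA (ra.right t)) • ra.left t
        = (Int (g * P.SinvA (ra.right t)) • (1 : A)) * ra.left t := by
          rw [smul_mul_assoc, one_mul]
      _ = (∑ i ∈ rg.index, ∑ s ∈ (rr t).index,
            Int (rg.left i * P.SinvA ((rr t).right s)) •
              (rg.right i * P.SinvA ((rr t).left s))) * ra.left t := by rw [h]
      _ = _ := by
          rw [Finset.sum_mul]
          refine Finset.sum_congr rfl fun i _ => ?_
          rw [Finset.sum_mul]
          refine Finset.sum_congr rfl fun s _ => ?_
          rw [smul_mul_assoc, mul_assoc]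
  symm
  calc (∑ t ∈ ra.index, Int (g * P.SinvA (ra.right t)) • ra.left t)
      = ∑ t ∈ ra.index, ∑ i ∈ rg.index, ∑ s ∈ (rr t).index,
          Int (rg.left i * P.SinvA ((rr t).right s)) •
            (rg.right i * (P.SinvA ((rr t).left s) * ra.left t)) :=
        Finset.sum_congr rfl fun t _ => step2 t
    _ = ∑ i ∈ rg.index, ∑ t ∈ ra.index, ∑ s ∈ (rr t).index,
          Int (rg.left i * P.SinvA ((rr t).right s)) •
            (rg.right i * (P.SinvA ((rr t).left s) * ra.left t)) := Finset.sum_comm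
    _ = ∑ i ∈ rg.index, ∑ t ∈ ra.index, ∑ s ∈ (rl t).index,
          Int (rg.left i * P.SinvA (ra.right t)) •
            (rg.right i * (P.SinvA ((rl t).right s) * (rl t).left s)) := by
        refine Finset.sum_congr rfl fun i _ => ?_
        set κ : A ⊗[k] A →ₗ[k] A := LinearMap.mul' k A ∘ₗ
          TensorProduct.map P.SinvA LinearMap.id ∘ₗ
            (TensorProduct.comm k A A).toLinearMap with hκ
        set lam : A →ₗ[k] k :=
          Int ∘ₗ LinearMap.mulLeft k (rg.left i) ∘ₗ P.SinvA with hlam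
        set Ψ : A ⊗[k] (A ⊗[k] A) →ₗ[k] A :=
          LinearMap.mulLeft k (rg.right i) ∘ₗ (TensorProduct.rid k A).toLinearMap ∘ₗ
            TensorProduct.map κ lam ∘ₗ
              (TensorProduct.assoc k A A A).symm.toLinearMap with hΨ
        have hterm : ∀ α β γ : A, Ψ (α ⊗ₜ[k] (β ⊗ₜ[k] γ))
            = Int (rg.left i * P.SinvA γ) • (rg.right i * (P.SinvA β * α)) := by
          intro α β γ
          simp only [hΨ, hκ, hlam, LinearMap.coe_comp, LinearEquiv.coe_coe,
            Function.comp_apply, TensorProduct.assoc_symm_tmul, TensorProduct.map_tmul,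
            TensorProduct.comm_tmul, LinearMap.id_coe, id_eq, LinearMap.mul'_apply,
            TensorProduct.rid_tmul, LinearMap.mulLeft_apply, mul_smul_comm]
        have ht := repr_transfer Ψ ra rl rr
        simp only [hterm] at ht
        exact ht
    _ = ∑ i ∈ rg.index, Int (rg.left i * P.SinvA a) • rg.right i := by
        refine Finset.sum_congr rfl fun i _ => ?_
        calc (∑ t ∈ ra.index, ∑ s ∈ (rl t).index,
              Int (rg.left i * P.SinvA (ra.right t)) •
                (rg.right i * (P.SinvA ((rl t).right s) * (rl t).left s)))
            = ∑ t ∈ ra.index,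
                (counit (R := k) (ra.left t) * Int (rg.left i * P.SinvA (ra.right t))) •
                  rg.right i := by
              refine Finset.sum_congr rfl fun t _ => ?_
              rw [← Finset.smul_sum, ← Finset.mul_sum, ph_sinv_mul_left P (rl t),
                mul_smul_comm, mul_one, ← mul_smul, mul_comm]
            _ = Int (rg.left i * P.SinvA a) • rg.right i := by
              rw [← Finset.sum_smul]
              congr 1
              calc (∑ t ∈ ra.index,
                    counit (R := k) (ra.left t) * Int (rg.left i * P.SinvA (ra.right t)))
                  = Int (rg.left i * P.SinvA
                      (∑ t ∈ ra.index, counit (R := k) (ra.left t) • ra.right t)) := by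
                    rw [map_sum, Finset.mul_sum, map_sum]
                    refine Finset.sum_congr rfl fun t _ => ?_
                    rw [map_smul, mul_smul_comm, map_smul, smul_eq_mul]
                _ = Int (rg.left i * P.SinvA a) := by rw [repr_counit_smul_right ra]

end Star
open Coalgebra in
/-- The right Fourier transform `F(a) = ∑ i, ∫(a S⁻¹(f i)) e i` turns the right convolution
`f ⋆ g = g₍₁₎ ∫(f S⁻¹(g₍₂₎))` into multiplication: `F(f ⋆ g) = F(f) · F(g)`. -/
theorem fourier_transform_convolution
    {k U A ι : Type*} [Field k] [Ring U] [Ring A]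
    [HopfAlgebra k U] [HopfAlgebra k A] [Fintype ι] [DecidableEq ι]
    (P : PairedHopf k U A ι)
    (Int : A →ₗ[k] k)
    (hinv : ∀ a : A,
      (TensorProduct.lid k A) (TensorProduct.map Int LinearMap.id (comul (R := k) a)) =
        Int a • (1 : A)) :
    ∀ f g : A,
      (∑ i, Int (((TensorProduct.rid k A)
          (TensorProduct.map LinearMap.id (Int ∘ₗ LinearMap.mulLeft k f ∘ₗ P.SinvA)
            (comul (R := k) g))) * P.SinvA (P.f i)) • P.e i) =
        (∑ i, Int (f * P.SinvA (P.f i)) • P.e i) *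
          ∑ i, Int (g * P.SinvA (P.f i)) • P.e i := by
  intro f g
  classical
  let rg : Repr k g (A × A) := Repr.arbitrary k g
  let ra : ∀ m : ι, Repr k (P.f m) (A × A) := fun m => Repr.arbitrary k (P.f m)
  have hc : (TensorProduct.rid k A) (TensorProduct.map LinearMap.id
        (Int ∘ₗ LinearMap.mulLeft k f ∘ₗ P.SinvA) (comul (R := k) g))
      = ∑ i ∈ rg.index, Int (f * P.SinvA (rg.right i)) • rg.left i := by
    rw [← rg.eq, map_sum, map_sum]
    refine Finset.sum_congr rfl fun i _ => ?_
    simp only [TensorProduct.map_tmul, LinearMap.id_coe, id_eq, LinearMap.coe_comp,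
      Function.comp_apply, LinearMap.mulLeft_apply, TensorProduct.rid_tmul]
  rw [hc]
  set c : A := ∑ i ∈ rg.index, Int (f * P.SinvA (rg.right i)) • rg.left i with hcdef
  -- the key pointwise identity
  have key : ∀ m : ι, Int (c * P.SinvA (P.f m))
      = ∑ t ∈ (ra m).index,
          Int (f * P.SinvA ((ra m).left t)) * Int (g * P.SinvA ((ra m).right t)) := by
    intro m
    have hstar := ph_star P Int hinv g (P.f m) rg (ra m)
    have h1 : Int (c * P.SinvA (P.f m))
        = ∑ i ∈ rg.index,
            Int (f * P.SinvA (rg.right i)) * Int (rg.left i * P.SinvA (P.f m)) := by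
      rw [hcdef, Finset.sum_mul, map_sum]
      refine Finset.sum_congr rfl fun i _ => ?_
      rw [smul_mul_assoc, map_smul, smul_eq_mul]
    have hL : Int (f * P.SinvA
          (∑ i ∈ rg.index, Int (rg.left i * P.SinvA (P.f m)) • rg.right i))
        = ∑ i ∈ rg.index,
            Int (rg.left i * P.SinvA (P.f m)) * Int (f * P.SinvA (rg.right i)) := by
      rw [map_sum, Finset.mul_sum, map_sum]
      refine Finset.sum_congr rfl fun i _ => ?_
      rw [map_smul, mul_smul_comm, map_smul, smul_eq_mul]
    have hR : Int (f * P.SinvA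
          (∑ t ∈ (ra m).index, Int (g * P.SinvA ((ra m).right t)) • (ra m).left t))
        = ∑ t ∈ (ra m).index,
            Int (g * P.SinvA ((ra m).right t)) * Int (f * P.SinvA ((ra m).left t)) := by
      rw [map_sum, Finset.mul_sum, map_sum]
      refine Finset.sum_congr rfl fun t _ => ?_
      rw [map_smul, mul_smul_comm, map_smul, smul_eq_mul]
    calc Int (c * P.SinvA (P.f m))
        = ∑ i ∈ rg.index,
            Int (f * P.SinvA (rg.right i)) * Int (rg.left i * P.SinvA (P.f m)) := h1
      _ = ∑ i ∈ rg.index,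
            Int (rg.left i * P.SinvA (P.f m)) * Int (f * P.SinvA (rg.right i)) :=
          Finset.sum_congr rfl fun i _ => mul_comm _ _
      _ = Int (f * P.SinvA
            (∑ i ∈ rg.index, Int (rg.left i * P.SinvA (P.f m)) • rg.right i)) := hL.symm
      _ = Int (f * P.SinvA
            (∑ t ∈ (ra m).index, Int (g * P.SinvA ((ra m).right t)) • (ra m).left t)) := by
          rw [hstar]
      _ = ∑ t ∈ (ra m).index,
            Int (g * P.SinvA ((ra m).right t)) * Int (f * P.SinvA ((ra m).left t)) := hR
      _ = ∑ t ∈ (ra m).index,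
            Int (f * P.SinvA ((ra m).left t)) * Int (g * P.SinvA ((ra m).right t)) :=
          Finset.sum_congr rfl fun t _ => mul_comm _ _
  -- pairing of the RHS with f m
  have hXY : (∑ i, Int (f * P.SinvA (P.f i)) • P.e i) *
        (∑ j, Int (g * P.SinvA (P.f j)) • P.e j)
      = ∑ i, ∑ j, (Int (f * P.SinvA (P.f i)) * Int (g * P.SinvA (P.f j))) •
          (P.e i * P.e j) := by
    rw [Finset.sum_mul_sum]
    exact Finset.sum_congr rfl fun i _ => Finset.sum_congr rfl fun j _ =>
      smul_mul_smul_comm _ _ _ _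
  have hpair_ee : ∀ (m : ι) (i j : ι), P.pair (P.e i * P.e j) (P.f m)
      = ∑ t ∈ (ra m).index,
          P.pair (P.e i) ((ra m).left t) * P.pair (P.e j) ((ra m).right t) := by
    intro m i j
    rw [P.pair_mul_left]
    simp only [LinearMap.coe_comp, Function.comp_apply]
    rw [← (ra m).eq, map_sum, map_sum]
    simp only [TensorProduct.map_tmul, LinearMap.mul'_apply]
  have hexp : ∀ h w : A,
      (∑ i, Int (h * P.SinvA (P.f i)) * P.pair (P.e i) w) = Int (h * P.SinvA w) := by
    intro h w
    calc (∑ i, Int (h * P.SinvA (P.f i)) * P.pair (P.e i) w)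
        = Int (h * P.SinvA (∑ i, P.pair (P.e i) w • P.f i)) := by
          rw [map_sum, Finset.mul_sum, map_sum]
          refine Finset.sum_congr rfl fun i _ => ?_
          rw [map_smul, mul_smul_comm, map_smul, smul_eq_mul, mul_comm]
      _ = Int (h * P.SinvA w) := by rw [P.expand_A]
  have hpairR : ∀ m : ι,
      P.pair ((∑ i, Int (f * P.SinvA (P.f i)) • P.e i) *
        ∑ j, Int (g * P.SinvA (P.f j)) • P.e j) (P.f m)
      = Int (c * P.SinvA (P.f m)) := by
    intro m
    rw [hXY, key m]
    simp only [map_sum, map_smul, LinearMap.sum_apply, Finset.sum_apply,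
      LinearMap.smul_apply, smul_eq_mul]
    calc (∑ i, ∑ j, (Int (f * P.SinvA (P.f i)) * Int (g * P.SinvA (P.f j))) *
            P.pair (P.e i * P.e j) (P.f m))
        = ∑ i, ∑ j, ∑ t ∈ (ra m).index,
            (Int (f * P.SinvA (P.f i)) * Int (g * P.SinvA (P.f j))) *
              (P.pair (P.e i) ((ra m).left t) * P.pair (P.e j) ((ra m).right t)) := by
          refine Finset.sum_congr rfl fun i _ => Finset.sum_congr rfl fun j _ => ?_
          rw [hpair_ee m i j, Finset.mul_sum]
      _ = ∑ t ∈ (ra m).index, ∑ i, ∑ j,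
            (Int (f * P.SinvA (P.f i)) * Int (g * P.SinvA (P.f j))) *
              (P.pair (P.e i) ((ra m).left t) * P.pair (P.e j) ((ra m).right t)) := by
          rw [show (∑ i : ι, ∑ j : ι, ∑ t ∈ (ra m).index,
              (Int (f * P.SinvA (P.f i)) * Int (g * P.SinvA (P.f j))) *
                (P.pair (P.e i) ((ra m).left t) * P.pair (P.e j) ((ra m).right t)))
              = ∑ i : ι, ∑ t ∈ (ra m).index, ∑ j : ι,
              (Int (f * P.SinvA (P.f i)) * Int (g * P.SinvA (P.f j))) *
                (P.pair (P.e i) ((ra m).left t) * P.pair (P.e j) ((ra m).right t)) from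
            Finset.sum_congr rfl fun i _ => Finset.sum_comm]
          exact Finset.sum_comm
      _ = ∑ t ∈ (ra m).index,
            (∑ i, Int (f * P.SinvA (P.f i)) * P.pair (P.e i) ((ra m).left t)) *
              (∑ j, Int (g * P.SinvA (P.f j)) * P.pair (P.e j) ((ra m).right t)) := by
          refine Finset.sum_congr rfl fun t _ => ?_
          rw [Finset.sum_mul_sum]
          exact Finset.sum_congr rfl fun i _ => Finset.sum_congr rfl fun j _ =>
            mul_mul_mul_comm _ _ _ _
      _ = ∑ t ∈ (ra m).index,
            Int (f * P.SinvA ((ra m).left t)) * Int (g * P.SinvA ((ra m).right t)) := by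
          refine Finset.sum_congr rfl fun t _ => ?_
          rw [hexp f ((ra m).left t), hexp g ((ra m).right t)]
  have hdelta : ∀ m : ι,
      P.pair (∑ i, Int (c * P.SinvA (P.f i)) • P.e i) (P.f m)
        = Int (c * P.SinvA (P.f m)) := by
    intro m
    simp only [map_sum, map_smul, LinearMap.sum_apply, Finset.sum_apply,
      LinearMap.smul_apply, P.pair_basis, smul_eq_mul, mul_ite, mul_one, mul_zero,
      Finset.sum_ite_eq', Finset.mem_univ, if_true]
  calc (∑ i, Int (c * P.SinvA (P.f i)) • P.e i)
      = ∑ m, P.pair (∑ i, Int (c * P.SinvA (P.f i)) • P.e i) (P.f m) • P.e m :=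
        (P.expand_U _).symm
    _ = ∑ m, P.pair ((∑ i, Int (f * P.SinvA (P.f i)) • P.e i) *
          ∑ j, Int (g * P.SinvA (P.f j)) • P.e j) (P.f m) • P.e m := by
        refine Finset.sum_congr rfl fun m _ => ?_
        rw [hdelta m, hpairR m]
    _ = _ := P.expand_U _
end
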